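/- arXiv:1903.06882 — 10 statements merged into one kernel-verified Lean document; each statement's English description precedes it below -/
import Mathlib

section
/- The bracket relations [L_m, L_n] = (n-m)L_{m+n} for m,n ∈ pℤ, [L_m, L_r] = r L_{m+r} for m ∈ pℤ, r ∉ pℤ, and [L_r, L_s] = 0 for r,s ∉ pℤ, extended bilinearly and antisymmetrically, satisfy the Jacobi identity, so they define a Lie algebra structure on the ℂ-vector space with basis {L_m : m ∈ ℤ}. -/
open Finsupp

-- Structure constants of the gap-`p` Witt algebra `g'` on the basis `{L_m : m ∈ ℤ}`:
-- `[L_m,L_n] = (n-m)L_{m+n}` for `m,n ∈ pℤ`, `[L_m,L_r] = r L_{m+r}` for `m ∈ pℤ`, `r ∉ pℤ`,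
-- `[L_r,L_s] = 0` for `r,s ∉ pℤ`, extended antisymmetrically.
open Classical in
noncomputable def wittB (p : ℕ) (m n : ℤ) : ℤ →₀ ℂ :=
  if (p : ℤ) ∣ m ∧ (p : ℤ) ∣ n then (n - m : ℂ) • Finsupp.single (m + n) 1
  else if (p : ℤ) ∣ m then (n : ℂ) • Finsupp.single (m + n) 1
  else if (p : ℤ) ∣ n then (-(m : ℂ)) • Finsupp.single (m + n) 1
  else 0

-- Bilinear extension of a bracket given by structure constants on a basis.
noncomputable def bilinExt {B C : Type} (b : B → B → (C →₀ ℂ)) (x y : B →₀ ℂ) : C →₀ ℂ :=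
  x.sum fun m a => y.sum fun n c => (a * c) • b m n

/-! Both identities are (tri)linear in their arguments, so it suffices to check them on basis
vectors. There the structure constant of `[L_m, L_n]` is `δ m * n - δ n * m`, with `δ` the
indicator of `pℤ`, and the Jacobi identity becomes a polynomial identity modulo the relations
`δ a * δ (a + b) = δ a * δ b`, which hold because `p ∣ a` implies `p ∣ a + b ↔ p ∣ b`. -/

section bilinExt

variable {B C : Type} (b : B → B → (C →₀ ℂ))

@[simp]
lemma bilinExt_zero_left (y : B →₀ ℂ) : bilinExt b 0 y = 0 := by
  simp [bilinExt]

@[simp]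
lemma bilinExt_zero_right (x : B →₀ ℂ) : bilinExt b x 0 = 0 := by
  simp [bilinExt]

lemma bilinExt_add_left (x x' y : B →₀ ℂ) :
    bilinExt b (x + x') y = bilinExt b x y + bilinExt b x' y := by
  unfold bilinExt
  rw [sum_add_index']
  · simp
  · intro m a a'
    simp [add_mul, add_smul, sum_add]

lemma bilinExt_add_right (x y y' : B →₀ ℂ) :
    bilinExt b x (y + y') = bilinExt b x y + bilinExt b x y' := by
  unfold bilinExt
  rw [← sum_add]
  refine sum_congr fun m _ => ?_
  rw [sum_add_index']
  · simp
  · intro n c c'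
    simp [mul_add, add_smul]

lemma bilinExt_single_single (m n : B) (a c : ℂ) :
    bilinExt b (single m a) (single n c) = (a * c) • b m n := by
  simp [bilinExt, sum_single_index]

lemma bilinExt_antisymm (h : ∀ m n, b m n = -b n m) (x y : B →₀ ℂ) :
    bilinExt b x y = -bilinExt b y x := by
  induction x using Finsupp.induction_linear generalizing y with
  | zero => simp
  | add x x' hx hx' => rw [bilinExt_add_left, bilinExt_add_right, neg_add, hx, hx']
  | single m a =>
    induction y using Finsupp.induction_linear with
    | zero => simp
    | add y y' hy hy' => rw [bilinExt_add_left, bilinExt_add_right, neg_add, hy, hy']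
    | single n c => rw [bilinExt_single_single, bilinExt_single_single, h, mul_comm, smul_neg]

end bilinExt

section jacobiator

variable {B : Type} (b : B → B → (B →₀ ℂ))

noncomputable def jacobiator (x y z : B →₀ ℂ) : B →₀ ℂ :=
  bilinExt b x (bilinExt b y z) + bilinExt b y (bilinExt b z x) + bilinExt b z (bilinExt b x y)

lemma jacobiator_cycle (x y z : B →₀ ℂ) : jacobiator b x y z = jacobiator b y z x := by
  unfold jacobiator
  abel

lemma jacobiator_eq_zero_of_single_left (y z : B →₀ ℂ)
    (h : ∀ m a, jacobiator b (single m a) y z = 0) (x : B →₀ ℂ) : jacobiator b x y z = 0 := by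
  induction x using Finsupp.induction_linear with
  | zero => simp [jacobiator]
  | add x x' hx hx' =>
    calc jacobiator b (x + x') y z = jacobiator b x y z + jacobiator b x' y z := by
          simp only [jacobiator, bilinExt_add_left, bilinExt_add_right]
          abel
      _ = 0 := by rw [hx, hx', add_zero]
  | single m a => exact h m a

lemma jacobiator_eq_zero
    (h : ∀ m n k a c d, jacobiator b (single m a) (single n c) (single k d) = 0)
    (x y z : B →₀ ℂ) : jacobiator b x y z = 0 := by
  refine jacobiator_eq_zero_of_single_left b y z (fun m a => ?_) x
  rw [jacobiator_cycle]
  refine jacobiator_eq_zero_of_single_left b z _ (fun n c => ?_) y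
  rw [jacobiator_cycle]
  refine jacobiator_eq_zero_of_single_left b _ _ (fun k d => ?_) z
  rw [jacobiator_cycle]
  exact h m n k a c d

end jacobiator

section witt

variable (p : ℕ)

noncomputable def dvdIndicator (m : ℤ) : ℂ := if (p : ℤ) ∣ m then 1 else 0

lemma dvdIndicator_mul_dvdIndicator_add (m n : ℤ) :
    dvdIndicator p m * dvdIndicator p (m + n) = dvdIndicator p m * dvdIndicator p n := by
  by_cases hm : (p : ℤ) ∣ m <;> simp [dvdIndicator, hm, dvd_add_right]

noncomputable def wittCoeff (m n : ℤ) : ℂ := dvdIndicator p m * n - dvdIndicator p n * m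

lemma wittB_eq_single (m n : ℤ) : wittB p m n = single (m + n) (wittCoeff p m n) := by
  by_cases hm : (p : ℤ) ∣ m <;> by_cases hn : (p : ℤ) ∣ n <;>
    simp [wittB, wittCoeff, dvdIndicator, hm, hn, smul_single]

lemma wittB_antisymm (m n : ℤ) : wittB p m n = -wittB p n m := by
  rw [wittB_eq_single, wittB_eq_single, ← single_neg, add_comm n, wittCoeff, wittCoeff, neg_sub]

lemma wittCoeff_jacobi (m n k : ℤ) :
    wittCoeff p n k * wittCoeff p m (n + k) + wittCoeff p k m * wittCoeff p n (k + m)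
      + wittCoeff p m n * wittCoeff p k (m + n) = 0 := by
  have hnk := dvdIndicator_mul_dvdIndicator_add p n k
  have hkn := dvdIndicator_mul_dvdIndicator_add p k n
  have hkm := dvdIndicator_mul_dvdIndicator_add p k m
  have hmk := dvdIndicator_mul_dvdIndicator_add p m k
  have hmn := dvdIndicator_mul_dvdIndicator_add p m n
  have hnm := dvdIndicator_mul_dvdIndicator_add p n m
  rw [add_comm k n] at hkn
  rw [add_comm m k] at hmk
  rw [add_comm n m] at hnm
  simp only [wittCoeff]
  push_cast
  linear_combination (-(k : ℂ) * m) * hnk + ((n : ℂ) * m) * hkn + (-(m : ℂ) * n) * hkm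
    + ((k : ℂ) * n) * hmk + (-(n : ℂ) * k) * hmn + ((m : ℂ) * k) * hnm

lemma jacobiator_wittB_single (m n k : ℤ) (a c d : ℂ) :
    jacobiator (wittB p) (single m a) (single n c) (single k d) = 0 := by
  simp only [jacobiator, bilinExt_single_single, wittB_eq_single, smul_single, smul_eq_mul]
  rw [show n + (k + m) = m + (n + k) by ring, show k + (m + n) = m + (n + k) by ring,
    ← single_add, ← single_add, single_eq_zero]
  linear_combination (a * c * d) * wittCoeff_jacobi p m n k

end witt

theorem stmt_0_general (p : ℕ) :
    (∀ x y : ℤ →₀ ℂ, bilinExt (wittB p) x y = - bilinExt (wittB p) y x) ∧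
    (∀ x y z : ℤ →₀ ℂ,
      bilinExt (wittB p) x (bilinExt (wittB p) y z)
        + bilinExt (wittB p) y (bilinExt (wittB p) z x)
        + bilinExt (wittB p) z (bilinExt (wittB p) x y) = 0) :=
  ⟨bilinExt_antisymm _ (wittB_antisymm p),
    jacobiator_eq_zero _ (jacobiator_wittB_single p)⟩

/-- The bracket relations of the gap-`p` Witt algebra, extended bilinearly and
antisymmetrically, satisfy the Jacobi identity, hence define a Lie algebra structure on the
ℂ-vector space with basis `{L_m : m ∈ ℤ}`. -/
theorem stmt_0 (p : ℕ) (hp : 1 < p) :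
    (∀ x y : ℤ →₀ ℂ, bilinExt (wittB p) x y = - bilinExt (wittB p) y x) ∧
    (∀ x y z : ℤ →₀ ℂ,
      bilinExt (wittB p) x (bilinExt (wittB p) y z)
        + bilinExt (wittB p) y (bilinExt (wittB p) z x)
        + bilinExt (wittB p) z (bilinExt (wittB p) x y) = 0) :=
  stmt_0_general p
end

section
/- The center of the gap-p Virasoro algebra g is exactly the p-dimensional space spanned by C_0, C_1, ..., C_{p-1}. -/
/-!
For `p ∣ n`, bracketing with `L_n` sends `L_m` to `c(m, n) L_{m+n}` plus a central term, so the
`L_{m+n}`-coefficient of `[x, L_n]` is `x_m c(m, n)`. Taking `n = 0` if `p ∤ m` and `n = m + p`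
if `p ∣ m` makes `c(m, n)` nonzero, hence a central `x` has no `L_m`-components. Conversely the
`C_i` are central, and they are linearly independent.
-/

open Finsupp

-- Structure constants of the gap-`p` Virasoro algebra `g` (see the paper, Section 1).
open Classical in
noncomputable def gVirB (p : ℕ) (x y : ℤ ⊕ ZMod p) : (ℤ ⊕ ZMod p) →₀ ℂ :=
  match x, y with
  | Sum.inl m, Sum.inl n =>
    if (p : ℤ) ∣ m ∧ (p : ℤ) ∣ n then
      (n - m : ℂ) • Finsupp.single (Sum.inl (m + n)) 1
        + (if m + n = 0 then
            ((1 : ℂ) / 12) * (((m / (p : ℤ) : ℤ) : ℂ) ^ 3 - ((m / (p : ℤ) : ℤ) : ℂ))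
          else 0) • Finsupp.single (Sum.inr 0) 1
    else if (p : ℤ) ∣ m then (n : ℂ) • Finsupp.single (Sum.inl (m + n)) 1
    else if (p : ℤ) ∣ n then (-(m : ℂ)) • Finsupp.single (Sum.inl (m + n)) 1
    else if m + n = 0 then (m : ℂ) • Finsupp.single (Sum.inr (m : ZMod p)) 1
    else 0
  | _, _ => 0

section BilinExt

variable {B C : Type}

lemma bilinExt_single_one_right (b : B → B → (C →₀ ℂ)) (x : B →₀ ℂ) (j : B) :
    bilinExt b x (single j 1) = x.sum fun i a => a • b i j := by
  unfold bilinExt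
  refine sum_congr fun i _ => ?_
  rw [sum_single_index (by simp), mul_one]

lemma bilinExt_eq_zero_of_mem_supported_left {b : B → B → (C →₀ ℂ)} {S : Set B}
    (hb : ∀ i ∈ S, ∀ j, b i j = 0) {x : B →₀ ℂ} (hx : x ∈ supported ℂ ℂ S) (y : B →₀ ℂ) :
    bilinExt b x y = 0 :=
  Finset.sum_eq_zero fun i hi => Finset.sum_eq_zero fun j _ => by
    simp only [hb i (hx hi) j, smul_zero]

lemma bilinExt_eq_zero_of_mem_supported_right {b : B → B → (C →₀ ℂ)} {S : Set B}
    (hb : ∀ i, ∀ j ∈ S, b i j = 0) (x : B →₀ ℂ) {y : B →₀ ℂ} (hy : y ∈ supported ℂ ℂ S) :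
    bilinExt b x y = 0 :=
  Finset.sum_eq_zero fun i _ => Finset.sum_eq_zero fun j hj => by
    simp only [hb i j (hy hj), smul_zero]

end BilinExt

section GapVirasoro

variable (p : ℕ)

lemma gVirB_inr_left (i : ZMod p) (a : ℤ ⊕ ZMod p) : gVirB p (Sum.inr i) a = 0 := by
  cases a <;> rfl

lemma gVirB_inr_right (a : ℤ ⊕ ZMod p) (i : ZMod p) : gVirB p a (Sum.inr i) = 0 := by
  cases a <;> rfl

/-- For `p ∣ n`, the bracket `[L_m, L_n]` is `gVirCoeff p m n • L_{m+n}` plus a central term. -/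
def gVirCoeff (m n : ℤ) : ℂ := if (p : ℤ) ∣ m then n - m else -m

lemma gVirB_inl_inl_apply_inl {n : ℤ} (hn : (p : ℤ) ∣ n) (m t : ℤ) :
    gVirB p (Sum.inl m) (Sum.inl n) (Sum.inl t) = if m + n = t then gVirCoeff p m n else 0 := by
  simp only [gVirB, gVirCoeff]
  split_ifs <;> simp_all

lemma bilinExt_gVirB_single_one_apply (x : (ℤ ⊕ ZMod p) →₀ ℂ) {n : ℤ} (hn : (p : ℤ) ∣ n)
    (m : ℤ) :
    bilinExt (gVirB p) x (single (Sum.inl n) 1) (Sum.inl (m + n)) =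
      x (Sum.inl m) * gVirCoeff p m n := by
  rw [bilinExt_single_one_right, Finsupp.sum_apply, sum_eq_single (Sum.inl m) ?_ (by simp)]
  · rw [Finsupp.smul_apply, gVirB_inl_inl_apply_inl p hn, if_pos rfl, smul_eq_mul]
  · rintro (k | i) _ hk
    · rw [Finsupp.smul_apply, gVirB_inl_inl_apply_inl p hn,
        if_neg fun h => hk (congrArg Sum.inl (by omega)), smul_zero]
    · rw [gVirB_inr_left, smul_zero, coe_zero, Pi.zero_apply]

lemma exists_dvd_gVirCoeff_ne_zero {p : ℕ} (hp : p ≠ 0) (m : ℤ) :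
    ∃ n, (p : ℤ) ∣ n ∧ gVirCoeff p m n ≠ 0 := by
  by_cases hm : (p : ℤ) ∣ m
  · refine ⟨m + p, dvd_add hm dvd_rfl, ?_⟩
    simp [gVirCoeff, hm, hp]
  · refine ⟨0, dvd_zero _, ?_⟩
    have : m ≠ 0 := by rintro rfl; exact hm (dvd_zero _)
    simp [gVirCoeff, hm, this]

lemma apply_inl_eq_zero_of_bilinExt_gVirB_eq_zero {p : ℕ} (hp : p ≠ 0)
    {x : (ℤ ⊕ ZMod p) →₀ ℂ} (hx : ∀ y, bilinExt (gVirB p) x y = 0) (m : ℤ) :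
    x (Sum.inl m) = 0 := by
  obtain ⟨n, hn, hc⟩ := exists_dvd_gVirCoeff_ne_zero hp m
  have h := bilinExt_gVirB_single_one_apply p x hn m
  rw [hx, coe_zero, Pi.zero_apply, eq_comm, mul_eq_zero] at h
  exact h.resolve_right hc

lemma span_single_inr_eq_supported :
    Submodule.span ℂ (Set.range fun i : ZMod p => (single (Sum.inr i) (1 : ℂ) : (ℤ ⊕ ZMod p) →₀ ℂ))
      = supported ℂ ℂ (Set.range (Sum.inr : ZMod p → ℤ ⊕ ZMod p)) := by
  rw [supported_eq_span_single, ← Set.range_comp]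
  rfl

end GapVirasoro

/-- The center of the gap-`p` Virasoro algebra `g` is exactly the `p`-dimensional space
spanned by `C_0, C_1, …, C_{p-1}`. -/
theorem stmt_2 (p : ℕ) (hp : 1 < p) :
    {x : (ℤ ⊕ ZMod p) →₀ ℂ |
        ∀ y, bilinExt (gVirB p) x y = 0 ∧ bilinExt (gVirB p) y x = 0}
      = ↑(Submodule.span ℂ
          (Set.range fun i : ZMod p =>
            (Finsupp.single (Sum.inr i) (1 : ℂ) : (ℤ ⊕ ZMod p) →₀ ℂ))) ∧
    Module.finrank ℂ
        ↥(Submodule.span ℂ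
          (Set.range fun i : ZMod p =>
            (Finsupp.single (Sum.inr i) (1 : ℂ) : (ℤ ⊕ ZMod p) →₀ ℂ))) = p := by
  have hp0 : p ≠ 0 := by omega
  have : NeZero p := ⟨hp0⟩
  refine ⟨?_, ?_⟩
  · rw [span_single_inr_eq_supported]
    ext x
    refine ⟨fun hx => (mem_supported' ℂ x).2 ?_, fun hx y => ⟨?_, ?_⟩⟩
    · rintro (m | i) hm
      · exact apply_inl_eq_zero_of_bilinExt_gVirB_eq_zero hp0 (fun y => (hx y).1) m
      · exact absurd ⟨i, rfl⟩ hm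
    · exact bilinExt_eq_zero_of_mem_supported_left
        (by rintro _ ⟨i, rfl⟩ a; exact gVirB_inr_left p i a) hx y
    · exact bilinExt_eq_zero_of_mem_supported_right
        (by rintro a _ ⟨i, rfl⟩; exact gVirB_inr_right p a i) y hx
  · have hli := (linearIndependent_single_one ℂ (ℤ ⊕ ZMod p)).comp Sum.inr Sum.inr_injective
    exact (finrank_span_eq_card hli).trans (ZMod.card p)
end

section
/- Inside the centerless Heisenberg-Virasoro algebra, the subspace spanned by {x_m : m ∈ pℤ} ∪ {I_r : r ∈ ℤ \ pℤ} is a Lie subalgebra, and the map L_m ↦ x_m (for m ∈ pℤ), L_r ↦ I_r (for r ∉ pℤ) is a Lie algebra isomorphism from g' onto this subalgebra. -/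
/-!
`wMap p` sends the basis `{L_m}` of `g'` injectively onto the basis
`{x_m : p ∣ m} ∪ {I_r : p ∤ r}` of `hvSub p`, so it is a linear isomorphism onto `hvSub p`.
Both brackets are bilinear, so compatibility with the brackets reduces to basis elements, where it
is a case analysis on whether `p` divides `m` and `n`; the only point is that
`p ∣ m`, `p ∤ n` forces `p ∤ m + n`. Closure of `hvSub p` under the bracket then follows,
since `hvSub p` is the image of `g'`.
-/

open Finsupp

-- Structure constants of the centerless Heisenberg–Virasoro algebra on the basis
-- `{x_m : m ∈ ℤ} ∪ {I_r : r ∈ ℤ}` (`x_m = Sum.inl m`, `I_r = Sum.inr r`):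
-- `[x_m,x_n] = (n-m)x_{m+n}`, `[x_m,I_r] = r I_{m+r}`, `[I_r,I_s] = 0`.
noncomputable def hvB (x y : ℤ ⊕ ℤ) : (ℤ ⊕ ℤ) →₀ ℂ :=
  match x, y with
  | Sum.inl m, Sum.inl n => (n - m : ℂ) • Finsupp.single (Sum.inl (m + n)) 1
  | Sum.inl m, Sum.inr r => (r : ℂ) • Finsupp.single (Sum.inr (m + r)) 1
  | Sum.inr r, Sum.inl m => (-(r : ℂ)) • Finsupp.single (Sum.inr (m + r)) 1
  | Sum.inr _, Sum.inr _ => 0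

-- The map `L_m ↦ x_m` for `m ∈ pℤ`, `L_r ↦ I_r` for `r ∉ pℤ`, on basis elements.
open Classical in
noncomputable def wMap (p : ℕ) (m : ℤ) : (ℤ ⊕ ℤ) →₀ ℂ :=
  if (p : ℤ) ∣ m then Finsupp.single (Sum.inl m) 1 else Finsupp.single (Sum.inr m) 1

-- The subspace of the centerless Heisenberg–Virasoro algebra spanned by
-- `{x_m : m ∈ pℤ} ∪ {I_r : r ∉ pℤ}`.
noncomputable def hvSub (p : ℕ) : Submodule ℂ ((ℤ ⊕ ℤ) →₀ ℂ) :=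
  Submodule.span ℂ
    (((fun m : ℤ => (Finsupp.single (Sum.inl m) (1 : ℂ) : (ℤ ⊕ ℤ) →₀ ℂ)) ''
        {m : ℤ | (p : ℤ) ∣ m})
      ∪ ((fun r : ℤ => (Finsupp.single (Sum.inr r) (1 : ℂ) : (ℤ ⊕ ℤ) →₀ ℂ)) ''
        {r : ℤ | ¬ (p : ℤ) ∣ r}))

noncomputable def bilinExtₗ {B C : Type} (b : B → B → (C →₀ ℂ)) :
    (B →₀ ℂ) →ₗ[ℂ] (B →₀ ℂ) →ₗ[ℂ] C →₀ ℂ :=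
  lsum ℂ fun m => LinearMap.toSpanSingleton ℂ _ (linearCombination ℂ (b m))

theorem bilinExtₗ_apply {B C : Type} (b : B → B → (C →₀ ℂ)) (x y : B →₀ ℂ) :
    bilinExtₗ b x y = bilinExt b x y := by
  simp [bilinExtₗ, bilinExt, linearCombination_apply, Finsupp.smul_sum, smul_smul]

theorem bilinExt_single_one {B C : Type} (b : B → B → (C →₀ ℂ)) (m n : B) :
    bilinExt b (single m 1) (single n 1) = b m n := by
  simp [bilinExt]

open Classical in
noncomputable def wIndex (p : ℕ) (m : ℤ) : ℤ ⊕ ℤ :=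
  if (p : ℤ) ∣ m then Sum.inl m else Sum.inr m

theorem wMap_eq_single (p : ℕ) (m : ℤ) : wMap p m = single (wIndex p m) 1 := by
  unfold wMap wIndex
  split_ifs <;> rfl

theorem wIndex_injective (p : ℕ) : Function.Injective (wIndex p) :=
  Function.LeftInverse.injective (g := Sum.elim id id) fun m => by
    unfold wIndex
    split_ifs <;> rfl

theorem linearIndependent_wMap (p : ℕ) : LinearIndependent ℂ (wMap p) := by
  rw [show wMap p = (fun i => single i 1) ∘ wIndex p from funext (wMap_eq_single p)]
  exact (linearIndependent_single_one ℂ (ℤ ⊕ ℤ)).comp _ (wIndex_injective p)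

theorem range_wMap (p : ℕ) :
    Set.range (wMap p) =
      ((fun m : ℤ => (single (Sum.inl m) (1 : ℂ) : (ℤ ⊕ ℤ) →₀ ℂ)) '' {m : ℤ | (p : ℤ) ∣ m})
        ∪ ((fun r : ℤ => (single (Sum.inr r) (1 : ℂ) : (ℤ ⊕ ℤ) →₀ ℂ)) ''
          {r : ℤ | ¬ (p : ℤ) ∣ r}) := by
  ext w
  simp only [Set.mem_range, Set.mem_union, Set.mem_image, Set.mem_ofPred_eq, wMap]
  constructor
  · rintro ⟨m, rfl⟩
    by_cases h : (p : ℤ) ∣ m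
    · exact Or.inl ⟨m, h, by rw [if_pos h]⟩
    · exact Or.inr ⟨m, h, by rw [if_neg h]⟩
  · rintro (⟨m, h, rfl⟩ | ⟨r, h, rfl⟩)
    · exact ⟨m, by rw [if_pos h]⟩
    · exact ⟨r, by rw [if_neg h]⟩

theorem range_linearCombination_wMap (p : ℕ) :
    LinearMap.range (linearCombination ℂ (wMap p)) = hvSub p := by
  rw [range_linearCombination, range_wMap, hvSub]

theorem hvB_wIndex (p : ℕ) (m n : ℤ) :
    hvB (wIndex p m) (wIndex p n) = linearCombination ℂ (wMap p) (wittB p m n) := by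
  by_cases hm : (p : ℤ) ∣ m <;> by_cases hn : (p : ℤ) ∣ n
  · have hmn : (p : ℤ) ∣ m + n := dvd_add hm hn
    simp [wIndex, wittB, wMap, hvB, hm, hn, hmn]
  · have hmn : ¬ (p : ℤ) ∣ m + n := fun h => hn (by simpa using dvd_sub h hm)
    simp [wIndex, wittB, wMap, hvB, hm, hn, hmn]
  · have hmn : ¬ (p : ℤ) ∣ m + n := fun h => hm (by simpa using dvd_sub h hn)
    simp [wIndex, wittB, wMap, hvB, hm, hn, hmn, add_comm]
  · simp [wIndex, wittB, hvB, hm, hn]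

theorem bilinExt_linearCombination_wMap (p : ℕ) (u v : ℤ →₀ ℂ) :
    bilinExt hvB (linearCombination ℂ (wMap p) u) (linearCombination ℂ (wMap p) v)
      = linearCombination ℂ (wMap p) (bilinExt (wittB p) u v) := by
  have h : (bilinExtₗ hvB).compl₁₂ (linearCombination ℂ (wMap p)) (linearCombination ℂ (wMap p))
      = (bilinExtₗ (wittB p)).compr₂ (linearCombination ℂ (wMap p)) := by
    ext m n
    simp [bilinExtₗ_apply, wMap_eq_single, bilinExt_single_one, hvB_wIndex]
  simpa [bilinExtₗ_apply] using LinearMap.congr_fun₂ h u v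

theorem stmt_4_general (p : ℕ) :
    (∀ u ∈ hvSub p, ∀ v ∈ hvSub p, bilinExt hvB u v ∈ hvSub p) ∧
    Function.Injective (Finsupp.linearCombination ℂ (wMap p)) ∧
    LinearMap.range (Finsupp.linearCombination ℂ (wMap p)) = hvSub p ∧
    (∀ u v : ℤ →₀ ℂ,
      bilinExt hvB (Finsupp.linearCombination ℂ (wMap p) u)
          (Finsupp.linearCombination ℂ (wMap p) v)
        = Finsupp.linearCombination ℂ (wMap p) (bilinExt (wittB p) u v)) := by
  refine ⟨?_, linearIndependent_wMap p, range_linearCombination_wMap p,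
    bilinExt_linearCombination_wMap p⟩
  rw [← range_linearCombination_wMap p]
  rintro _ ⟨u, rfl⟩ _ ⟨v, rfl⟩
  rw [bilinExt_linearCombination_wMap]
  exact LinearMap.mem_range_self _ _

/-- The subspace spanned by `{x_m : m ∈ pℤ} ∪ {I_r : r ∉ pℤ}` is a Lie subalgebra of the
centerless Heisenberg–Virasoro algebra, and `L_m ↦ x_m`, `L_r ↦ I_r` is a Lie algebra
isomorphism from `g'` onto it. -/
theorem stmt_4 (p : ℕ) (hp : 1 < p) :
    (∀ u ∈ hvSub p, ∀ v ∈ hvSub p, bilinExt hvB u v ∈ hvSub p) ∧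
    Function.Injective (Finsupp.linearCombination ℂ (wMap p)) ∧
    LinearMap.range (Finsupp.linearCombination ℂ (wMap p)) = hvSub p ∧
    (∀ u v : ℤ →₀ ℂ,
      bilinExt hvB (Finsupp.linearCombination ℂ (wMap p) u)
          (Finsupp.linearCombination ℂ (wMap p) v)
        = Finsupp.linearCombination ℂ (wMap p) (bilinExt (wittB p) u v)) :=
  stmt_4_general p
end

section
/- Let V be a nontrivial ℤ-graded module over an infinite-dimensional Heisenberg Lie algebra on which a central element acts as a nonzero scalar. Then the dimensions of the homogeneous components of V are unbounded. -/
/-!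
After rescaling, the modes `a (-1), a 1` and `a (-2), a 2` form two commuting copies
`X₁, D₁` and `X₂, D₂` of the Weyl relation `[D, X] = 1`, homogeneous of degrees `∓1, ∓2`.
Fix a nonzero homogeneous `v ∈ W k₀`. The normally ordered monomials `M α` of total degree
`≤ m` stay linearly independent when restricted to the span of the vectors `M β v` with
`|β| ≤ m`: commuting with `D₁, D₂, -X₁, -X₂` lowers one exponent of a monomial, so an
annihilating combination produces, by commutation, annihilating combinations of lower
degree, and induction on `m` applies. There are about `m⁴ / 24` such monomials, but each of
them maps the `O(m)` homogeneous components around `k₀` into `O(m)` components, a space of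
maps of dimension `O(m² N²)` if every component has dimension at most `N`.
-/

namespace Weyl

open Finset Module

section MultiIndex

variable {ι : Type*} [DecidableEq ι]

lemma sub_single_add_single {α : ι → ℕ} {i : ι} (h : α i ≠ 0) :
    α - Pi.single i 1 + Pi.single i 1 = α := by
  funext j
  by_cases hj : j = i
  · subst hj
    simp only [Pi.add_apply, Pi.sub_apply, Pi.single_eq_same]
    omega
  · simp [hj]

variable [Fintype ι]

variable (ι) in
def degLE (m : ℕ) : Finset (ι → ℕ) :=
  (Iic fun _ => m).filter fun α => ∑ i, α i ≤ m

lemma mem_degLE {m : ℕ} {α : ι → ℕ} : α ∈ degLE ι m ↔ ∑ i, α i ≤ m := by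
  refine mem_filter.trans (and_iff_right_of_imp fun h => mem_Iic.2 fun i => ?_)
  exact (single_le_sum (fun j _ => Nat.zero_le (α j)) (mem_univ i)).trans h

lemma sum_add_single (α : ι → ℕ) (i : ι) : ∑ j, (α + Pi.single i 1 : ι → ℕ) j = ∑ j, α j + 1 := by
  simp [sum_add_distrib]

lemma mem_degLE_zero {α : ι → ℕ} : α ∈ degLE ι 0 ↔ α = 0 := by
  simp [mem_degLE, funext_iff]

lemma sub_single_mem_degLE {m : ℕ} {α : ι → ℕ} {i : ι} (hα : α ∈ degLE ι (m + 1)) (h : α i ≠ 0) :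
    α - Pi.single i 1 ∈ degLE ι m := by
  have := sum_add_single (α - Pi.single i 1) i
  rw [sub_single_add_single h] at this
  have := mem_degLE.1 hα
  exact mem_degLE.2 (by omega)

lemma pow_card_le_card_degLE (t : ℕ) :
    (t + 1) ^ Fintype.card ι ≤ #(degLE ι (Fintype.card ι * t)) := by
  have hbox : Iic (fun _ => t) ⊆ degLE ι (Fintype.card ι * t) := fun α hα =>
    mem_degLE.2 <| (sum_le_sum fun i _ => mem_Iic.1 hα i).trans_eq (by simp)
  simpa [Pi.card_Iic] using card_le_card hbox

lemma sum_degLE_succ_nsmul {M : Type*} [AddCommMonoid M] (m : ℕ) (i : ι) (f : (ι → ℕ) → M) :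
    ∑ α ∈ degLE ι (m + 1), α i • f α = ∑ β ∈ degLE ι m, (β i + 1) • f (β + Pi.single i 1) := by
  have hsub : (degLE ι m).image (· + Pi.single i 1) ⊆ degLE ι (m + 1) := by
    simp only [subset_iff, mem_image, mem_degLE, forall_exists_index, and_imp]
    rintro _ β hβ rfl
    rw [sum_add_single]; omega
  symm
  calc ∑ β ∈ degLE ι m, (β i + 1) • f (β + Pi.single i 1)
      = ∑ α ∈ (degLE ι m).image (· + Pi.single i 1), α i • f α := by
        rw [sum_image fun _ _ _ _ h => add_right_cancel h]
        simp
    _ = ∑ α ∈ degLE ι (m + 1), α i • f α := by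
        refine sum_subset hsub fun α hα hα' => ?_
        suffices α i = 0 by simp [this]
        by_contra h
        exact hα' (mem_image.2 ⟨_, sub_single_mem_degLE hα h, sub_single_add_single h⟩)

end MultiIndex

section Lowering

variable {K V ι : Type*} [Field K] [AddCommGroup V] [Module K V]
  [Fintype ι] [DecidableEq ι] {M : (ι → ℕ) → Module.End K V} {g : ι → Module.End K V}

lemma commutator_sum_degLE_succ
    (hcomm : ∀ i α, g i * M α - M α * g i = α i • M (α - Pi.single i 1))
    (m : ℕ) (i : ι) (c : (ι → ℕ) → K) :
    g i * (∑ α ∈ degLE ι (m + 1), c α • M α) - (∑ α ∈ degLE ι (m + 1), c α • M α) * g i =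
      ∑ β ∈ degLE ι m, (((β i : K) + 1) * c (β + Pi.single i 1)) • M β := by
  simp_rw [mul_sum, sum_mul, ← sum_sub_distrib, mul_smul_comm, smul_mul_assoc, ← smul_sub, hcomm,
    smul_comm (c _), sum_degLE_succ_nsmul, add_tsub_cancel_right, ← Nat.cast_smul_eq_nsmul K,
    smul_smul, Nat.cast_add_one]

lemma apply_eq_zero_of_mem_span {B : Module.End K V} {v : V} {m : ℕ}
    (hB : ∀ β ∈ degLE ι m, B (M β v) = 0) {A : Module.End K V}
    (hA : A ∈ Submodule.span K (M '' degLE ι m)) : B (A v) = 0 := by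
  induction hA using Submodule.span_induction with
  | mem _ h => obtain ⟨β, hβ, rfl⟩ := h; exact hB β hβ
  | zero => simp
  | add _ _ _ _ h₁ h₂ => simp [h₁, h₂]
  | smul _ _ _ h => simp [h]

lemma coeff_zero_eq_zero_of_forall_apply_eq_zero (hM : M 0 = 1) {v : V} (hv : v ≠ 0) {m : ℕ}
    {c : (ι → ℕ) → K}
    (hc : ∀ β ∈ degLE ι m, (∑ α ∈ degLE ι m, c α • M α) (M β v) = 0)
    (hc' : ∀ α ∈ degLE ι m, α ≠ 0 → c α = 0) : c 0 = 0 := by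
  have h0 : (0 : ι → ℕ) ∈ degLE ι m := mem_degLE.2 (by simp)
  have := hc 0 h0
  rw [sum_eq_single_of_mem 0 h0 fun α hα hα0 => by rw [hc' α hα hα0, zero_smul], hM] at this
  simpa [hv] using this

theorem coeff_eq_zero_of_forall_apply_eq_zero [CharZero K] (hM : M 0 = 1)
    (hcomm : ∀ i α, g i * M α - M α * g i = α i • M (α - Pi.single i 1))
    (hmul : ∀ i α, g i * M α ∈ Submodule.span K (M '' degLE ι (∑ j, α j + 1)))
    {v : V} (hv : v ≠ 0) (m : ℕ) (c : (ι → ℕ) → K)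
    (hc : ∀ β ∈ degLE ι m, (∑ α ∈ degLE ι m, c α • M α) (M β v) = 0) :
    ∀ α ∈ degLE ι m, c α = 0 := by
  induction m generalizing c with
  | zero =>
    intro α hα
    rw [mem_degLE_zero.1 hα]
    exact coeff_zero_eq_zero_of_forall_apply_eq_zero hM hv hc fun β hβ hβ0 =>
      (hβ0 (mem_degLE_zero.1 hβ)).elim
  | succ m ih =>
    have hlower : ∀ i, ∀ β ∈ degLE ι m, c (β + Pi.single i 1) = 0 := by
      intro i β hβ
      refine (mul_eq_zero.1 (ih (fun β => ((β i : K) + 1) * c (β + Pi.single i 1))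
        (fun γ hγ => ?_) β hβ)).resolve_left (Nat.cast_add_one_ne_zero _)
      have hγ' := mem_degLE.1 hγ
      rw [← commutator_sum_degLE_succ hcomm, LinearMap.sub_apply, Module.End.mul_apply,
        Module.End.mul_apply, hc γ (mem_degLE.2 (by omega)), map_zero, zero_sub, neg_eq_zero]
      refine apply_eq_zero_of_mem_span hc (Submodule.span_mono ?_ (hmul i γ))
      exact Set.image_mono fun α hα => mem_degLE.2 (by have := mem_degLE.1 hα; omega)
    have hne : ∀ α ∈ degLE ι (m + 1), α ≠ 0 → c α = 0 := by
      intro α hα hα0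
      obtain ⟨i, hi⟩ := Function.ne_iff.1 hα0
      rw [← sub_single_add_single hi]
      exact hlower i _ (sub_single_mem_degLE hα hi)
    intro α hα
    by_cases hα0 : α = 0
    · exact hα0 ▸ coeff_zero_eq_zero_of_forall_apply_eq_zero hM hv hc hne
    · exact hne α hα hα0

end Lowering

section Grading

variable {K V : Type*} [Field K] [AddCommGroup V] [Module K V] {W : ℤ → Submodule K V}

variable (W) in
def IsHomogeneous (d : ℤ) (T : Module.End K V) : Prop :=
  ∀ k, ∀ w ∈ W k, T w ∈ W (k + d)

namespace IsHomogeneous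

variable {d e : ℤ} {S T : Module.End K V}

lemma mul (hS : IsHomogeneous W d S) (hT : IsHomogeneous W e T) :
    IsHomogeneous W (e + d) (S * T) := fun k w hw => by
  simpa [add_assoc] using hS _ _ (hT k w hw)

lemma pow (hT : IsHomogeneous W d T) (n : ℕ) : IsHomogeneous W (n * d) (T ^ n) := by
  induction n with
  | zero => intro k w hw; simpa using hw
  | succ n ih => simpa [pow_succ', add_mul, add_comm] using hT.mul ih

lemma smul (hT : IsHomogeneous W d T) (c : K) : IsHomogeneous W d (c • T) :=
  fun k w hw => Submodule.smul_mem _ c (hT k w hw)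

end IsHomogeneous

lemma abs_sum_mul_le {ι : Type*} [Fintype ι] {e : ι → ℤ} {L : ℕ} (he : ∀ i, |e i| ≤ L)
    (α : ι → ℕ) : |∑ i, α i * e i| ≤ ↑(L * ∑ i, α i) := by
  calc |∑ i, α i * e i| ≤ ∑ i, |(α i : ℤ) * e i| := abs_sum_le_sum_abs _ _
    _ ≤ ∑ i, (α i : ℤ) * L := sum_le_sum fun i _ => by
        rw [abs_mul, Nat.abs_cast]; exact mul_le_mul_of_nonneg_left (he i) (by positivity)
    _ = ↑(L * ∑ i, α i) := by push_cast; rw [mul_sum]; simp only [mul_comm]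

variable (W) in
noncomputable def window (k₀ : ℤ) (r : ℕ) : Submodule K V := (Icc (k₀ - r) (k₀ + r)).sup W

instance [∀ k, FiniteDimensional K (W k)] (k₀ : ℤ) (r : ℕ) :
    FiniteDimensional K (window W k₀ r) :=
  Submodule.finiteDimensional_finset_sup _ _

lemma le_window {k₀ j : ℤ} {r : ℕ} (h : |j - k₀| ≤ r) : W j ≤ window W k₀ r :=
  le_sup (f := W) <| mem_Icc.2
    ⟨by linarith [neg_abs_le (j - k₀)], by linarith [le_abs_self (j - k₀)]⟩

lemma IsHomogeneous.mapsTo_window {d : ℤ} {T : Module.End K V} (hT : IsHomogeneous W d T)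
    {s : ℕ} (hd : |d| ≤ s) (k₀ : ℤ) (r : ℕ) {w : V} (hw : w ∈ window W k₀ r) :
    T w ∈ window W k₀ (r + s) := by
  suffices window W k₀ r ≤ (window W k₀ (r + s)).comap T from this hw
  refine Finset.sup_le fun j hj u hu => le_window ?_ (hT j u hu)
  have := mem_Icc.1 hj
  rw [abs_le] at hd ⊢
  push_cast
  constructor <;> linarith

lemma finrank_finset_sup_le_sum {ι : Type*} (s : Finset ι) (f : ι → Submodule K V)
    [∀ i, FiniteDimensional K (f i)] : finrank K ↥(s.sup f) ≤ ∑ i ∈ s, finrank K (f i) := by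
  classical
  induction s using Finset.induction_on with
  | empty => simp
  | insert a s ha ih =>
    rw [sup_insert, sum_insert ha]
    exact (Submodule.finrank_add_le_finrank_add_finrank _ _).trans (Nat.add_le_add_left ih _)

lemma finrank_window_le [∀ k, FiniteDimensional K (W k)] {N : ℕ}
    (hN : ∀ k, finrank K (W k) ≤ N) (k₀ : ℤ) (r : ℕ) :
    finrank K (window W k₀ r) ≤ (2 * r + 1) * N := by
  refine (finrank_finset_sup_le_sum _ W).trans ((sum_le_card_nsmul _ _ N fun k _ => hN k).trans ?_)
  rw [Int.card_Icc, smul_eq_mul]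
  gcongr
  omega

lemma card_le_finrank_mul_finrank {σ τ : Type*} {S : Finset σ} {U : Finset τ}
    {F : σ → Module.End K V} {u : τ → V} {P Q : Submodule K V}
    [FiniteDimensional K P] [FiniteDimensional K Q]
    (hF : ∀ α ∈ S, ∀ w ∈ P, F α w ∈ Q) (hu : ∀ β ∈ U, u β ∈ P)
    (hind : ∀ c : σ → K, (∀ β ∈ U, (∑ α ∈ S, c α • F α) (u β) = 0) → ∀ α ∈ S, c α = 0) :
    #S ≤ finrank K P * finrank K Q := by
  classical
  let f : S → (P →ₗ[K] Q) := fun α => (F α).restrict (hF α α.2)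
  have hf : LinearIndependent K f := by
    refine Fintype.linearIndependent_iff.2 fun c hc α => ?_
    let c' : σ → K := fun a => if h : a ∈ S then c ⟨a, h⟩ else 0
    have hsum : ∑ a ∈ S, c' a • F a = ∑ a : S, c a • F a := by
      rw [← sum_coe_sort S]; simp [c']
    simpa [c'] using hind c' (fun β hβ => by
      simpa [hsum, f] using congr_arg Subtype.val (LinearMap.congr_fun hc ⟨u β, hu β hβ⟩)) α α.2
  calc #S = Fintype.card S := (Fintype.card_coe S).symm
    _ ≤ finrank K (P →ₗ[K] Q) := hf.fintype_card_le_finrank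
    _ = finrank K P * finrank K Q := Module.finrank_linearMap K K P Q

end Grading

section WeylAlgebra

variable {R : Type*} [Ring R]

lemma mul_pow_sub_pow_mul {a b : R} (h : a * b - b * a = 1) (n : ℕ) :
    a * b ^ n - b ^ n * a = n • b ^ (n - 1) := by
  induction n with
  | zero => simp
  | succ n ih =>
    calc a * b ^ (n + 1) - b ^ (n + 1) * a
        = (a * b ^ n - b ^ n * a) * b + b ^ n * (a * b - b * a) := by noncomm_ring
      _ = (n + 1) • b ^ n := by
        rw [ih, h, mul_one, smul_mul_assoc, succ_nsmul]
        rcases n with _ | n <;> simp [pow_succ]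

lemma commutator_mul_pow_mul {g b P Z : R} (hP : Commute g P) (hZ : Commute g Z)
    (h : g * b - b * g = 1) (n : ℕ) :
    g * (P * b ^ n * Z) - P * b ^ n * Z * g = n • (P * b ^ (n - 1) * Z) := by
  calc g * (P * b ^ n * Z) - P * b ^ n * Z * g = P * (g * b ^ n - b ^ n * g) * Z := by
        rw [← mul_assoc, ← mul_assoc, hP.eq, mul_assoc (P * b ^ n), ← hZ.eq]; noncomm_ring
    _ = n • (P * b ^ (n - 1) * Z) := by
        rw [mul_pow_sub_pow_mul h, mul_smul_comm, smul_mul_assoc]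

structure WeylRelations (X₁ X₂ D₁ D₂ : R) : Prop where
  commutator₁ : D₁ * X₁ - X₁ * D₁ = 1
  commutator₂ : D₂ * X₂ - X₂ * D₂ = 1
  commute_X : Commute X₁ X₂
  commute_D : Commute D₁ D₂
  commute_X₁_D₂ : Commute X₁ D₂
  commute_X₂_D₁ : Commute X₂ D₁

def weylMonomial (X₁ X₂ D₁ D₂ : R) (α : Fin 4 → ℕ) : R :=
  X₁ ^ α 0 * X₂ ^ α 1 * D₁ ^ α 2 * D₂ ^ α 3

lemma weylMonomial_zero (X₁ X₂ D₁ D₂ : R) : weylMonomial X₁ X₂ D₁ D₂ 0 = 1 := by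
  simp [weylMonomial]

lemma X₁_mul_weylMonomial (X₁ X₂ D₁ D₂ : R) (α : Fin 4 → ℕ) :
    X₁ * weylMonomial X₁ X₂ D₁ D₂ α = weylMonomial X₁ X₂ D₁ D₂ (α + Pi.single 0 1) := by
  simp [weylMonomial, pow_succ', mul_assoc]

lemma weylMonomial_mul_D₂ (X₁ X₂ D₁ D₂ : R) (α : Fin 4 → ℕ) :
    weylMonomial X₁ X₂ D₁ D₂ α * D₂ = weylMonomial X₁ X₂ D₁ D₂ (α + Pi.single 3 1) := by
  simp [weylMonomial, pow_succ, mul_assoc]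

def weylLowering (X₁ X₂ D₁ D₂ : R) : Fin 4 → R := ![D₁, D₂, -X₁, -X₂]

namespace WeylRelations

variable {X₁ X₂ D₁ D₂ : R} (h : WeylRelations X₁ X₂ D₁ D₂)
include h

lemma commutator_weylLowering (i : Fin 4) (α : Fin 4 → ℕ) :
    weylLowering X₁ X₂ D₁ D₂ i * weylMonomial X₁ X₂ D₁ D₂ α
      - weylMonomial X₁ X₂ D₁ D₂ α * weylLowering X₁ X₂ D₁ D₂ i
      = α i • weylMonomial X₁ X₂ D₁ D₂ (α - Pi.single i 1) := by
  have hX₁ : -X₁ * D₁ - D₁ * -X₁ = 1 := by rw [← h.commutator₁]; noncomm_ring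
  have hX₂ : -X₂ * D₂ - D₂ * -X₂ = 1 := by rw [← h.commutator₂]; noncomm_ring
  fin_cases i
  · simpa [weylLowering, weylMonomial, mul_assoc] using commutator_mul_pow_mul (Commute.one_right D₁)
      (((h.commute_X₂_D₁.symm.pow_right _).mul_right (Commute.self_pow _ _)).mul_right
        (h.commute_D.pow_right _)) h.commutator₁ (α 0)
  · simpa [weylLowering, weylMonomial, mul_assoc] using commutator_mul_pow_mul (h.commute_X₁_D₂.symm.pow_right (α 0))
      ((h.commute_D.symm.pow_right _).mul_right (Commute.self_pow _ _)) h.commutator₂ (α 1)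
  · simpa [weylLowering, weylMonomial, mul_assoc] using commutator_mul_pow_mul
      (((Commute.self_pow X₁ (α 0)).mul_right (h.commute_X.pow_right _)).neg_left)
      ((h.commute_X₁_D₂.pow_right (α 3)).neg_left) hX₁ (α 2)
  · simpa [weylLowering, weylMonomial, mul_assoc] using commutator_mul_pow_mul
      ((((h.commute_X.symm.pow_right (α 0)).mul_right (Commute.self_pow X₂ _)).mul_right
        (h.commute_X₂_D₁.pow_right _)).neg_left) (Commute.one_right (-X₂)) hX₂ (α 3)

lemma X₂_mul_weylMonomial (α : Fin 4 → ℕ) :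
    X₂ * weylMonomial X₁ X₂ D₁ D₂ α = weylMonomial X₁ X₂ D₁ D₂ (α + Pi.single 1 1) := by
  simp [weylMonomial, pow_succ', ← mul_assoc, (h.commute_X.pow_left (α 0)).eq]

lemma weylMonomial_mul_D₁ (α : Fin 4 → ℕ) :
    weylMonomial X₁ X₂ D₁ D₂ α * D₁ = weylMonomial X₁ X₂ D₁ D₂ (α + Pi.single 2 1) := by
  simp [weylMonomial, pow_succ, mul_assoc, (h.commute_D.pow_right (α 3)).eq]

lemma weylLowering_mul_mem_span {K : Type*} [Ring K] [Module K R] (i : Fin 4)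
    (α : Fin 4 → ℕ) : weylLowering X₁ X₂ D₁ D₂ i * weylMonomial X₁ X₂ D₁ D₂ α ∈
      Submodule.span K (weylMonomial X₁ X₂ D₁ D₂ '' degLE (Fin 4) (∑ j, α j + 1)) := by
  have hmem : ∀ β : Fin 4 → ℕ, ∑ j, β j ≤ ∑ j, α j + 1 →
      weylMonomial X₁ X₂ D₁ D₂ β ∈
        Submodule.span K (weylMonomial X₁ X₂ D₁ D₂ '' degLE (Fin 4) (∑ j, α j + 1)) :=
    fun β hβ => Submodule.subset_span (Set.mem_image_of_mem _ (mem_degLE.2 hβ))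
  have hsub : ∀ j, ∑ k, (α - Pi.single j 1 : Fin 4 → ℕ) k ≤ ∑ k, α k + 1 := fun j =>
    (sum_le_sum fun k _ => tsub_le_self).trans (Nat.le_succ _)
  have hadd : ∀ j, ∑ k, (α + Pi.single j 1 : Fin 4 → ℕ) k ≤ ∑ k, α k + 1 := fun j =>
    (sum_add_single α j).le
  have hcomm := h.commutator_weylLowering i α
  rw [sub_eq_iff_eq_add] at hcomm
  fin_cases i
  · rw [hcomm]
    refine add_mem (nsmul_mem (hmem _ (hsub _)) _) ?_
    exact h.weylMonomial_mul_D₁ α ▸ hmem _ (hadd _)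
  · rw [hcomm]
    refine add_mem (nsmul_mem (hmem _ (hsub _)) _) ?_
    exact weylMonomial_mul_D₂ X₁ X₂ D₁ D₂ α ▸ hmem _ (hadd _)
  · show -X₁ * _ ∈ _
    rw [neg_mul, X₁_mul_weylMonomial]
    exact neg_mem (hmem _ (hadd _))
  · show -X₂ * _ ∈ _
    rw [neg_mul, h.X₂_mul_weylMonomial]
    exact neg_mem (hmem _ (hadd _))

end WeylRelations

end WeylAlgebra

lemma isHomogeneous_weylMonomial {K V : Type*} [Field K] [AddCommGroup V] [Module K V]
    {W : ℤ → Submodule K V} {X₁ X₂ D₁ D₂ : Module.End K V} {e : Fin 4 → ℤ}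
    (hX₁ : IsHomogeneous W (e 0) X₁) (hX₂ : IsHomogeneous W (e 1) X₂)
    (hD₁ : IsHomogeneous W (e 2) D₁) (hD₂ : IsHomogeneous W (e 3) D₂) (α : Fin 4 → ℕ) :
    IsHomogeneous W (∑ i, α i * e i) (weylMonomial X₁ X₂ D₁ D₂ α) := by
  have := (((hX₁.pow (α 0)).mul (hX₂.pow (α 1))).mul (hD₁.pow (α 2))).mul (hD₂.pow (α 3))
  have hdeg : ∑ i, (α i : ℤ) * e i = α 3 * e 3 + (α 2 * e 2 + (α 1 * e 1 + α 0 * e 0)) := by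
    rw [Fin.sum_univ_four]; ring
  rw [hdeg]
  exact this

section Counting

variable {K V ι : Type*} [Field K] [AddCommGroup V] [Module K V] [Fintype ι] [DecidableEq ι]
  {W : ℤ → Submodule K V} [∀ k, FiniteDimensional K (W k)] {N : ℕ}

theorem card_degLE_le [CharZero K] {M : (ι → ℕ) → Module.End K V} {g : ι → Module.End K V}
    (hM : M 0 = 1) (hcomm : ∀ i α, g i * M α - M α * g i = α i • M (α - Pi.single i 1))
    (hmul : ∀ i α, g i * M α ∈ Submodule.span K (M '' degLE ι (∑ j, α j + 1)))
    {e : ι → ℤ} {L : ℕ} (he : ∀ i, |e i| ≤ L) (hgr : ∀ α, IsHomogeneous W (∑ i, α i * e i) (M α))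
    (hN : ∀ k, finrank K (W k) ≤ N) {v : V} {k₀ : ℤ} (hv : v ∈ W k₀) (hv0 : v ≠ 0) (m : ℕ) :
    #(degLE ι m) ≤ (2 * (L * m) + 1) * N * ((4 * (L * m) + 1) * N) := by
  have hmaps : ∀ α ∈ degLE ι m, ∀ r, ∀ w ∈ window W k₀ r, M α w ∈ window W k₀ (r + L * m) :=
    fun α hα r w hw => (hgr α).mapsTo_window
      ((abs_sum_mul_le he α).trans (by gcongr; exact mem_degLE.1 hα)) k₀ r hw
  have hv' : v ∈ window W k₀ 0 := le_window (by simp) hv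
  calc #(degLE ι m)
      ≤ finrank K (window W k₀ (L * m)) * finrank K (window W k₀ (L * m + L * m)) :=
        card_le_finrank_mul_finrank (fun α hα w hw => hmaps α hα _ w hw)
          (fun β hβ => by simpa using hmaps β hβ 0 v hv')
          (coeff_eq_zero_of_forall_apply_eq_zero hM hcomm hmul hv0 m)
    _ ≤ (2 * (L * m) + 1) * N * ((4 * (L * m) + 1) * N) :=
        Nat.mul_le_mul (finrank_window_le hN _ _) ((finrank_window_le hN _ _).trans_eq (by ring))

theorem WeylRelations.card_degLE_le [CharZero K] {X₁ X₂ D₁ D₂ : Module.End K V}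
    (h : WeylRelations X₁ X₂ D₁ D₂) {e : Fin 4 → ℤ} {L : ℕ} (he : ∀ i, |e i| ≤ L)
    (hX₁ : IsHomogeneous W (e 0) X₁) (hX₂ : IsHomogeneous W (e 1) X₂)
    (hD₁ : IsHomogeneous W (e 2) D₁) (hD₂ : IsHomogeneous W (e 3) D₂)
    (hN : ∀ k, finrank K (W k) ≤ N) {v : V} {k₀ : ℤ} (hv : v ∈ W k₀) (hv0 : v ≠ 0) (m : ℕ) :
    #(degLE (Fin 4) m) ≤ (2 * (L * m) + 1) * N * ((4 * (L * m) + 1) * N) :=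
  Weyl.card_degLE_le (weylMonomial_zero X₁ X₂ D₁ D₂) h.commutator_weylLowering
    h.weylLowering_mul_mem_span he (isHomogeneous_weylMonomial hX₁ hX₂ hD₁ hD₂) hN hv hv0 m

end Counting

lemma exists_lt_card_degLE_fin_four (L N : ℕ) :
    ∃ m, (2 * (L * m) + 1) * N * ((4 * (L * m) + 1) * N) < #(degLE (Fin 4) m) := by
  obtain ⟨t, ht⟩ : ∃ t, t = 12 * (L + 1) * (N + 1) := ⟨_, rfl⟩
  refine ⟨4 * t, lt_of_lt_of_le ?_ (by simpa using pow_card_le_card_degLE (ι := Fin 4) t)⟩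
  have h₁ : 2 * (L * (4 * t)) + 1 ≤ 8 * (L + 1) * (t + 1) := by nlinarith
  have h₂ : 4 * (L * (4 * t)) + 1 ≤ 16 * (L + 1) * (t + 1) := by nlinarith
  have h₃ : 128 * ((L + 1) * N) ^ 2 < (t + 1) ^ 2 :=
    calc 128 * ((L + 1) * N) ^ 2 ≤ (12 * ((L + 1) * N)) ^ 2 := by nlinarith
      _ < (t + 1) ^ 2 := Nat.pow_lt_pow_left (by rw [ht]; nlinarith) two_ne_zero
  calc (2 * (L * (4 * t)) + 1) * N * ((4 * (L * (4 * t)) + 1) * N)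
      ≤ 8 * (L + 1) * (t + 1) * N * (16 * (L + 1) * (t + 1) * N) := by gcongr
    _ = 128 * ((L + 1) * N) ^ 2 * (t + 1) ^ 2 := by ring
    _ < (t + 1) ^ 2 * (t + 1) ^ 2 := Nat.mul_lt_mul_of_pos_right h₃ (by positivity)
    _ = (t + 1) ^ 4 := by ring

lemma weylRelations_heisenberg {K R : Type*} [Field K] [CharZero K] [Ring R] [Algebra K R]
    {a : ℤ → R} {μ : K} (hμ : μ ≠ 0)
    (hcomm : ∀ m n : ℤ, m ≠ 0 → n ≠ 0 →
      a m * a n - a n * a m = if m + n = 0 then ((m : K) * μ) • (1 : R) else 0) :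
    WeylRelations (a (-1)) (a (-2)) (μ⁻¹ • a 1) ((2 * μ)⁻¹ • a 2) := by
  have hlie : ∀ n : ℤ, n ≠ 0 →
      ((n : K) * μ)⁻¹ • a n * a (-n) - a (-n) * (((n : K) * μ)⁻¹ • a n) = 1 := fun n hn => by
    rw [smul_mul_assoc, mul_smul_comm, ← smul_sub, hcomm n (-n) hn (neg_ne_zero.2 hn),
      if_pos (add_neg_cancel n), smul_smul,
      inv_mul_cancel₀ (mul_ne_zero (Int.cast_ne_zero.2 hn) hμ), one_smul]
  have hcomm' : ∀ p q : ℤ, p ≠ 0 → q ≠ 0 → p + q ≠ 0 → Commute (a p) (a q) :=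
    fun p q hp hq hpq => sub_eq_zero.1 (by rw [hcomm p q hp hq, if_neg hpq])
  refine ⟨by simpa using hlie 1 one_ne_zero, by simpa using hlie 2 two_ne_zero, ?_, ?_, ?_, ?_⟩
  · exact hcomm' _ _ (by norm_num) (by norm_num) (by norm_num)
  · exact ((hcomm' 1 2 (by norm_num) (by norm_num) (by norm_num)).smul_left _).smul_right _
  · exact (hcomm' (-1) 2 (by norm_num) (by norm_num) (by norm_num)).smul_right _
  · exact (hcomm' (-2) 1 (by norm_num) (by norm_num) (by norm_num)).smul_right _

lemma exists_mem_ne_zero_of_isInternal {K V ι : Type*} [Semiring K] [AddCommMonoid V] [Module K V]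
    [Nontrivial V] [DecidableEq ι] {W : ι → Submodule K V} (hW : DirectSum.IsInternal W) :
    ∃ k, ∃ v ∈ W k, v ≠ 0 := by
  by_contra! h
  have hbot : ⨆ k, W k = ⊥ := iSup_eq_bot.2 fun k => (Submodule.eq_bot_iff _).2 (h k)
  exact bot_ne_top (hbot ▸ hW.submodule_iSup_eq_top)

end Weyl

open Weyl in
/-- Let `V` be a nontrivial ℤ-graded module over the infinite-dimensional Heisenberg algebra
(with basis `{a_n : n ≠ 0} ∪ {c}`, `[a_m,a_n] = m δ_{m+n,0} c`, `c` central) on which the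
central element `c` acts as a nonzero scalar `μ`.  Then the dimensions of the homogeneous
components of `V` are unbounded. -/
theorem stmt_7 (V : Type) [AddCommGroup V] [Module ℂ V] [Nontrivial V]
    (a : ℤ → Module.End ℂ V) (μ : ℂ) (hμ : μ ≠ 0)
    (hcomm : ∀ m n : ℤ, m ≠ 0 → n ≠ 0 →
      a m * a n - a n * a m
        = if m + n = 0 then ((m : ℂ) * μ) • (1 : Module.End ℂ V) else 0)
    (W : ℤ → Submodule ℂ V) (hW : DirectSum.IsInternal W)
    (hgr : ∀ (n k : ℤ), n ≠ 0 → ∀ v ∈ W k, a n v ∈ W (k + n)) :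
    ∀ N : ℕ, ∃ k : ℤ, (N : Cardinal) < Module.rank ℂ ↥(W k) := by
  intro N
  by_contra! hN
  have : ∀ k, FiniteDimensional ℂ (W k) := fun k =>
    Module.rank_lt_aleph0_iff.1 ((hN k).trans_lt (Cardinal.natCast_lt_aleph0))
  have hN' : ∀ k, Module.finrank ℂ (W k) ≤ N := fun k => Module.finrank_le_of_rank_le (hN k)
  have ha : ∀ n : ℤ, n ≠ 0 → IsHomogeneous W n (a n) := fun n hn k => hgr n k hn
  obtain ⟨k₀, v, hv, hv0⟩ := exists_mem_ne_zero_of_isInternal hW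
  obtain ⟨m, hm⟩ := exists_lt_card_degLE_fin_four 2 N
  refine hm.not_ge ((weylRelations_heisenberg hμ hcomm).card_degLE_le (e := ![-1, -2, 1, 2])
    (by decide) (ha (-1) (by norm_num)) (ha (-2) (by norm_num)) ((ha 1 one_ne_zero).smul _)
    ((ha 2 two_ne_zero).smul _) hN' hv hv0 m)
end

section
/- Let M be a g'-module with a compatible associative action of A = ℂ[t^p, t^{-p}]. Then the formulas t^n(L_s ⊗ w) = L_{s+n} ⊗ w and a(L_s ⊗ w) = [a, L_s] ⊗ w + L_s ⊗ aw (for n ∈ pℤ, s ∉ pℤ, a ∈ g', w ∈ M) define an Ag'-module structure on g'' ⊗ M, where g'' = span{L_s : s ∉ pℤ}: the g'-action and A-action are compatible, i.e., L_m t^n v - t^n L_m v = n t^{m+n} v and t^n L_r v = L_r t^n v for m,n ∈ pℤ, r ∉ pℤ. -/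
/-!
All six identities are checked on the generators `L_s ⊗ w = single s w`. There `t^n` only
shifts the index `s ↦ s + n` (which stays outside `pℤ`), `L_m` with `m ∈ pℤ` adds the shifted
term `s • L_{s+m} ⊗ w` to `L_s ⊗ L_m w`, and `L_r` with `r ∉ pℤ` acts on `M` alone, so each
identity reduces to the corresponding bracket relation in `M` plus index arithmetic.
-/

-- The index `s + n` inside `{s : ℤ // s ∉ pℤ}` (for `n ∈ pℤ` the sum is again not in `pℤ`).
open Classical in
noncomputable def addIdx (p : ℕ) (s : {s : ℤ // ¬ (p : ℤ) ∣ s}) (n : ℤ) :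
    {s : ℤ // ¬ (p : ℤ) ∣ s} :=
  if h : ¬ (p : ℤ) ∣ (s.1 + n) then ⟨s.1 + n, h⟩ else s

-- The action of `t^n` on `g'' ⊗ M`, realized as `{s // s ∉ pℤ} →₀ M` via
-- `L_s ⊗ w ↔ single s w`:  `t^n (L_s ⊗ w) = L_{s+n} ⊗ w`.
noncomputable def tOp (p : ℕ) (M : Type) [AddCommGroup M] [Module ℂ M] (n : ℤ) :
    Module.End ℂ ({s : ℤ // ¬ (p : ℤ) ∣ s} →₀ M) :=
  Finsupp.lsum ℂ fun s => Finsupp.lsingle (addIdx p s n)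

-- The action of `L_a` (`a ∈ ℤ`) on `g'' ⊗ M`:
-- `a (L_s ⊗ w) = [L_a, L_s] ⊗ w + L_s ⊗ (a w)`, where `[L_m, L_s] = s L_{s+m}` for
-- `m ∈ pℤ` and `[L_r, L_s] = 0` for `r ∉ pℤ`.
open Classical in
noncomputable def lOp (p : ℕ) (M : Type) [AddCommGroup M] [Module ℂ M]
    (L : ℤ → Module.End ℂ M) (m : ℤ) :
    Module.End ℂ ({s : ℤ // ¬ (p : ℤ) ∣ s} →₀ M) :=
  Finsupp.lsum ℂ fun s =>
    (if (p : ℤ) ∣ m then (s.1 : ℂ) • Finsupp.lsingle (addIdx p s m)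
      else (0 : M →ₗ[ℂ] ({s : ℤ // ¬ (p : ℤ) ∣ s} →₀ M)))
    + (Finsupp.lsingle s).comp (L m : M →ₗ[ℂ] M)

lemma Module.End.apply_apply_of_mul_sub_mul_eq_smul {R V : Type*} [CommRing R]
    [AddCommGroup V] [Module R V] {A B C : Module.End R V} {c : R}
    (h : A * B - B * A = c • C) (w : V) : A (B w) = B (A w) + c • C w :=
  sub_eq_iff_eq_add'.mp (LinearMap.congr_fun h w)

section AddIdx

variable {p : ℕ}

lemma not_dvd_add_of_dvd {s n : ℤ} (hs : ¬ (p : ℤ) ∣ s) (hn : (p : ℤ) ∣ n) :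
    ¬ (p : ℤ) ∣ (s + n) :=
  fun h => hs (by simpa using h.sub hn)

lemma addIdx_val (s : {s : ℤ // ¬ (p : ℤ) ∣ s}) {n : ℤ} (hn : (p : ℤ) ∣ n) :
    (addIdx p s n).1 = s.1 + n := by
  rw [addIdx, dif_pos (not_dvd_add_of_dvd s.2 hn)]

lemma addIdx_addIdx (s : {s : ℤ // ¬ (p : ℤ) ∣ s}) {m n : ℤ} (hm : (p : ℤ) ∣ m)
    (hn : (p : ℤ) ∣ n) : addIdx p (addIdx p s n) m = addIdx p s (m + n) := by
  apply Subtype.ext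
  rw [addIdx_val _ hm, addIdx_val _ hn, addIdx_val _ (hm.add hn)]
  ring

end AddIdx

section Action

variable {p : ℕ} {M : Type} [AddCommGroup M] [Module ℂ M] (L : ℤ → Module.End ℂ M)

lemma tOp_single (n : ℤ) (s : {s : ℤ // ¬ (p : ℤ) ∣ s}) (w : M) :
    tOp p M n (Finsupp.single s w) = Finsupp.single (addIdx p s n) w := by
  simp [tOp]

lemma lOp_single_of_dvd {m : ℤ} (hm : (p : ℤ) ∣ m) (s : {s : ℤ // ¬ (p : ℤ) ∣ s}) (w : M) :
    lOp p M L m (Finsupp.single s w)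
      = (s.1 : ℂ) • Finsupp.single (addIdx p s m) w + Finsupp.single s (L m w) := by
  simp [lOp, hm]

lemma lOp_single_of_not_dvd {r : ℤ} (hr : ¬ (p : ℤ) ∣ r) (s : {s : ℤ // ¬ (p : ℤ) ∣ s})
    (w : M) : lOp p M L r (Finsupp.single s w) = Finsupp.single s (L r w) := by
  simp [lOp, hr]

lemma tOp_mul_tOp {m n : ℤ} (hm : (p : ℤ) ∣ m) (hn : (p : ℤ) ∣ n) :
    tOp p M m * tOp p M n = tOp p M (m + n) := by
  refine Finsupp.lhom_ext fun s w => ?_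
  rw [Module.End.mul_apply, tOp_single, tOp_single, tOp_single, addIdx_addIdx s hm hn]

lemma lOp_commutator_of_dvd_of_dvd {m n : ℤ} (hm : (p : ℤ) ∣ m) (hn : (p : ℤ) ∣ n)
    (hmn : L m * L n - L n * L m = (n - m : ℂ) • L (m + n)) :
    lOp p M L m * lOp p M L n - lOp p M L n * lOp p M L m
      = (n - m : ℂ) • lOp p M L (m + n) := by
  refine Finsupp.lhom_ext fun s w => ?_
  simp only [LinearMap.sub_apply, Module.End.mul_apply, LinearMap.smul_apply,
    lOp_single_of_dvd L hm, lOp_single_of_dvd L hn, lOp_single_of_dvd L (hm.add hn),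
    map_add, map_smul, Module.End.apply_apply_of_mul_sub_mul_eq_smul hmn,
    addIdx_addIdx s hm hn, addIdx_addIdx s hn hm, add_comm n m,
    addIdx_val s hm, addIdx_val s hn, Finsupp.single_add, ← Finsupp.smul_single]
  push_cast
  module

lemma lOp_commutator_of_dvd_of_not_dvd {m r : ℤ} (hm : (p : ℤ) ∣ m) (hr : ¬ (p : ℤ) ∣ r)
    (hmr : L m * L r - L r * L m = (r : ℂ) • L (m + r)) :
    lOp p M L m * lOp p M L r - lOp p M L r * lOp p M L m
      = (r : ℂ) • lOp p M L (m + r) := by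
  refine Finsupp.lhom_ext fun s w => ?_
  have hmr' : ¬ (p : ℤ) ∣ (m + r) := add_comm r m ▸ not_dvd_add_of_dvd hr hm
  simp only [LinearMap.sub_apply, Module.End.mul_apply, LinearMap.smul_apply,
    lOp_single_of_dvd L hm, lOp_single_of_not_dvd L hr, lOp_single_of_not_dvd L hmr',
    map_add, map_smul, Module.End.apply_apply_of_mul_sub_mul_eq_smul hmr,
    Finsupp.single_add, ← Finsupp.smul_single]
  module

lemma lOp_commutator_of_not_dvd_of_not_dvd {r s : ℤ} (hr : ¬ (p : ℤ) ∣ r)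
    (hs : ¬ (p : ℤ) ∣ s) (hrs : L r * L s - L s * L r = 0) :
    lOp p M L r * lOp p M L s - lOp p M L s * lOp p M L r = 0 := by
  refine Finsupp.lhom_ext fun i w => ?_
  have hcomm : L r (L s w) = L s (L r w) := LinearMap.congr_fun (sub_eq_zero.mp hrs) w
  simp only [LinearMap.sub_apply, Module.End.mul_apply, LinearMap.zero_apply,
    lOp_single_of_not_dvd L hr, lOp_single_of_not_dvd L hs, hcomm, sub_self]

lemma lOp_tOp_commutator_of_dvd {m n : ℤ} (hm : (p : ℤ) ∣ m) (hn : (p : ℤ) ∣ n) :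
    lOp p M L m * tOp p M n - tOp p M n * lOp p M L m = (n : ℂ) • tOp p M (m + n) := by
  refine Finsupp.lhom_ext fun s w => ?_
  simp only [LinearMap.sub_apply, Module.End.mul_apply, LinearMap.smul_apply,
    tOp_single, lOp_single_of_dvd L hm, map_add, map_smul,
    addIdx_addIdx s hm hn, addIdx_addIdx s hn hm, add_comm n m, addIdx_val s hn]
  push_cast
  module

lemma tOp_mul_lOp_of_not_dvd (n : ℤ) {r : ℤ} (hr : ¬ (p : ℤ) ∣ r) :
    tOp p M n * lOp p M L r = lOp p M L r * tOp p M n := by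
  refine Finsupp.lhom_ext fun s w => ?_
  simp only [Module.End.mul_apply, tOp_single, lOp_single_of_not_dvd L hr]

end Action

theorem stmt_9_general (p : ℕ) (M : Type) [AddCommGroup M] [Module ℂ M]
    (L : ℤ → Module.End ℂ M)
    (hrep1 : ∀ m n : ℤ, (p : ℤ) ∣ m → (p : ℤ) ∣ n →
      L m * L n - L n * L m = (n - m : ℂ) • L (m + n))
    (hrep2 : ∀ m r : ℤ, (p : ℤ) ∣ m → ¬ (p : ℤ) ∣ r →
      L m * L r - L r * L m = (r : ℂ) • L (m + r))
    (hrep3 : ∀ r s : ℤ, ¬ (p : ℤ) ∣ r → ¬ (p : ℤ) ∣ s → L r * L s - L s * L r = 0) :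
    (∀ m n : ℤ, (p : ℤ) ∣ m → (p : ℤ) ∣ n →
      tOp p M m * tOp p M n = tOp p M (m + n)) ∧
    (∀ m n : ℤ, (p : ℤ) ∣ m → (p : ℤ) ∣ n →
      lOp p M L m * lOp p M L n - lOp p M L n * lOp p M L m
        = (n - m : ℂ) • lOp p M L (m + n)) ∧
    (∀ m r : ℤ, (p : ℤ) ∣ m → ¬ (p : ℤ) ∣ r →
      lOp p M L m * lOp p M L r - lOp p M L r * lOp p M L m
        = (r : ℂ) • lOp p M L (m + r)) ∧
    (∀ r s : ℤ, ¬ (p : ℤ) ∣ r → ¬ (p : ℤ) ∣ s →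
      lOp p M L r * lOp p M L s - lOp p M L s * lOp p M L r = 0) ∧
    (∀ m n : ℤ, (p : ℤ) ∣ m → (p : ℤ) ∣ n →
      lOp p M L m * tOp p M n - tOp p M n * lOp p M L m = (n : ℂ) • tOp p M (m + n)) ∧
    (∀ n r : ℤ, (p : ℤ) ∣ n → ¬ (p : ℤ) ∣ r →
      tOp p M n * lOp p M L r = lOp p M L r * tOp p M n) :=
  ⟨fun _ _ hm hn => tOp_mul_tOp hm hn,
    fun m n hm hn => lOp_commutator_of_dvd_of_dvd L hm hn (hrep1 m n hm hn),
    fun m r hm hr => lOp_commutator_of_dvd_of_not_dvd L hm hr (hrep2 m r hm hr),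
    fun r s hr hs => lOp_commutator_of_not_dvd_of_not_dvd L hr hs (hrep3 r s hr hs),
    fun _ _ hm hn => lOp_tOp_commutator_of_dvd L hm hn,
    fun n _ _ hr => tOp_mul_lOp_of_not_dvd L n hr⟩

/-- Lemma 3.4: for a `g'`-module `M` with a compatible associative `A = ℂ[t^{±p}]`-action,
the formulas `t^n(L_s ⊗ w) = L_{s+n} ⊗ w` and `a(L_s ⊗ w) = [a,L_s] ⊗ w + L_s ⊗ aw` define
an `Ag'`-module structure on `g'' ⊗ M`: the `A`-action is associative, the `g'`-bracket
relations hold, and the two actions are compatible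
(`L_m t^n v - t^n L_m v = n t^{m+n} v` and `t^n L_r v = L_r t^n v`). -/
theorem stmt_9 (p : ℕ) (hp : 1 < p) (M : Type) [AddCommGroup M] [Module ℂ M]
    (L T : ℤ → Module.End ℂ M)
    (hrep1 : ∀ m n : ℤ, (p : ℤ) ∣ m → (p : ℤ) ∣ n →
      L m * L n - L n * L m = (n - m : ℂ) • L (m + n))
    (hrep2 : ∀ m r : ℤ, (p : ℤ) ∣ m → ¬ (p : ℤ) ∣ r →
      L m * L r - L r * L m = (r : ℂ) • L (m + r))
    (hrep3 : ∀ r s : ℤ, ¬ (p : ℤ) ∣ r → ¬ (p : ℤ) ∣ s → L r * L s - L s * L r = 0)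
    (hA : ∀ m n : ℤ, (p : ℤ) ∣ m → (p : ℤ) ∣ n → T m * T n = T (m + n))
    (hcomp1 : ∀ m n : ℤ, (p : ℤ) ∣ m → (p : ℤ) ∣ n →
      L m * T n - T n * L m = (n : ℂ) • T (m + n))
    (hcomp2 : ∀ n r : ℤ, (p : ℤ) ∣ n → ¬ (p : ℤ) ∣ r → T n * L r = L r * T n) :
    (∀ m n : ℤ, (p : ℤ) ∣ m → (p : ℤ) ∣ n →
      tOp p M m * tOp p M n = tOp p M (m + n)) ∧
    (∀ m n : ℤ, (p : ℤ) ∣ m → (p : ℤ) ∣ n →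
      lOp p M L m * lOp p M L n - lOp p M L n * lOp p M L m
        = (n - m : ℂ) • lOp p M L (m + n)) ∧
    (∀ m r : ℤ, (p : ℤ) ∣ m → ¬ (p : ℤ) ∣ r →
      lOp p M L m * lOp p M L r - lOp p M L r * lOp p M L m
        = (r : ℂ) • lOp p M L (m + r)) ∧
    (∀ r s : ℤ, ¬ (p : ℤ) ∣ r → ¬ (p : ℤ) ∣ s →
      lOp p M L r * lOp p M L s - lOp p M L s * lOp p M L r = 0) ∧
    (∀ m n : ℤ, (p : ℤ) ∣ m → (p : ℤ) ∣ n →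
      lOp p M L m * tOp p M n - tOp p M n * lOp p M L m = (n : ℂ) • tOp p M (m + n)) ∧
    (∀ n r : ℤ, (p : ℤ) ∣ n → ¬ (p : ℤ) ∣ r →
      tOp p M n * lOp p M L r = lOp p M L r * tOp p M n) :=
  stmt_9_general p M L hrep1 hrep2 hrep3
end

section
/- Suppose the operators Ω_{m,n} = Σ_{i=0}^{l} (-1)^i C(l,i) L_{m-in} L_{in} annihilate a g'-module M for all m,n ∈ pℤ, with l ≥ 2. Then for any n ∈ pℤ, s ∉ pℤ, and w ∈ M: Σ_{i=0}^{l} (-1)^i C(l,i) L_{n-ip+s} L_{ip} w + Σ_{i=0}^{l} (-1)^i C(l,i) L_{ip+s} L_{n-ip} w = 0. -/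
/-!
Apply `Ω_{n,p}` to `L_s w` and move `L_s` to the left through both factors of every term.
Each of the three commutators produced has one argument in `pℤ` and the other outside it,
so it is a multiple of a single `L`. The result is
`Ω_{n,p} (L_s w) = L_s (Ω_{n,p} w) + s • (S₁ + S₂) + (Σ_i (-1)^i C(l,i) s (ip + s)) • L_{n+s} w`,
where `S₁ + S₂` is the left-hand side of the claim. Both `Ω` terms vanish by hypothesis, and
the scalar sum vanishes because the `l`-th finite difference of an affine function is zero
once `l ≥ 2`. Since `s ≠ 0`, `S₁ + S₂ = 0`.
-/

open Finset Polynomial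

theorem Polynomial.sum_range_neg_one_pow_mul_choose_mul_eval_eq_zero {R : Type*} [CommRing R]
    {P : R[X]} {l : ℕ} (hP : P.natDegree < l) :
    ∑ i ∈ range (l + 1), (-1 : R) ^ i * l.choose i * P.eval (i : R) = 0 := by
  have h := congr_fun (fwdDiff_iter_eq_zero_of_degree_lt hP) 0
  rw [fwdDiff_iter_eq_sum_shift] at h
  -- Mathlib's `l`-th difference weights `f i` by `(-1)^(l-i)`, which is `(-1)^l (-1)^i`.
  have hterm : ∀ i ∈ range (l + 1), (-1 : R) ^ i * l.choose i * P.eval (i : R) =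
      (-1) ^ l * (((-1 : ℤ) ^ (l - i) * l.choose i) • P.eval (0 + i • (1 : R))) := by
    intro i hi
    obtain ⟨k, rfl⟩ := Nat.exists_eq_add_of_le (Nat.lt_succ_iff.mp (mem_range.mp hi))
    simp only [zero_add, nsmul_one, zsmul_eq_mul, Nat.add_sub_cancel_left]
    push_cast
    rw [← mul_assoc, ← mul_assoc, ← pow_add, add_assoc, ← two_mul, pow_add, pow_mul]
    simp
  rw [sum_congr rfl hterm, ← mul_sum, h, Pi.zero_apply, mul_zero]

theorem sum_range_neg_one_pow_mul_choose_mul_affine_eq_zero {R : Type*} [CommRing R]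
    {l : ℕ} (hl : 2 ≤ l) (a b : R) :
    ∑ i ∈ range (l + 1), (-1 : R) ^ i * l.choose i * (a * i + b) = 0 := by
  have hP : (C a * X + C b).natDegree < l := natDegree_linear_le.trans_lt (by omega)
  simpa using sum_range_neg_one_pow_mul_choose_mul_eval_eq_zero hP

section Commutators

variable {R M : Type*} [CommRing R] [AddCommGroup M] [Module R M] (L : ℤ → Module.End R M)

theorem apply_apply_eq_of_commutator_eq {a b t : ℤ} {c : R}
    (h : L a * L b - L b * L a = c • L t) (x : M) :
    L a (L b x) = L b (L a x) + c • L t x := by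
  rw [← sub_eq_iff_eq_add', ← Module.End.mul_apply, ← Module.End.mul_apply, ← LinearMap.sub_apply,
    h, LinearMap.smul_apply]

theorem apply_apply_apply_eq_of_commutator_eq {m k s : ℤ} {c d : R}
    (hks : L k * L s - L s * L k = c • L (k + s))
    (hms : L m * L s - L s * L m = c • L (m + s))
    {t : ℤ} (hmks : L m * L (k + s) - L (k + s) * L m = d • L t) (x : M) :
    L m (L k (L s x)) = L s (L m (L k x)) + c • (L (m + s) (L k x) + L (k + s) (L m x))
      + (c * d) • L t x := by
  rw [apply_apply_eq_of_commutator_eq L hks, map_add, map_smul,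
    apply_apply_eq_of_commutator_eq L hms, apply_apply_eq_of_commutator_eq L hmks]
  module

theorem sum_apply_apply_apply_eq {p : ℤ} {l : ℕ} (hl : 2 ≤ l)
    (hcomm : ∀ m r : ℤ, p ∣ m → ¬ p ∣ r → L m * L r - L r * L m = (r : R) • L (m + r))
    {n s : ℤ} (hn : p ∣ n) (hs : ¬ p ∣ s) (w : M) :
    ∑ i ∈ range (l + 1), ((-1 : R) ^ i * l.choose i) • L (n - i * p) (L (i * p) (L s w)) =
      L s (∑ i ∈ range (l + 1), ((-1 : R) ^ i * l.choose i) • L (n - i * p) (L (i * p) w))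
      + (s : R) • (∑ i ∈ range (l + 1),
            ((-1 : R) ^ i * l.choose i) • L (n - i * p + s) (L (i * p) w)
          + ∑ i ∈ range (l + 1),
            ((-1 : R) ^ i * l.choose i) • L (i * p + s) (L (n - i * p) w)) := by
  have hmul (i : ℕ) : p ∣ i * p := dvd_mul_left p i
  have hshift (i : ℕ) : ¬ p ∣ i * p + s := fun h => hs ((dvd_add_right (hmul i)).mp h)
  have hterm (i : ℕ) := apply_apply_apply_eq_of_commutator_eq L (hcomm _ s (hmul i) hs)
    (hcomm _ s (dvd_sub hn (hmul i)) hs)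
    ((show n - i * p + (i * p + s) = n + s by ring) ▸
      hcomm (n - i * p) _ (dvd_sub hn (hmul i)) (hshift i)) w
  have hcoeff : ∑ i ∈ range (l + 1), (-1 : R) ^ i * l.choose i * ((s : R) * ↑(i * p + s)) = 0 := by
    push_cast
    simpa only [mul_add, mul_assoc, mul_comm (p : R)] using
      sum_range_neg_one_pow_mul_choose_mul_affine_eq_zero hl ((s : R) * p) ((s : R) * s)
  simp only [hterm, smul_add, sum_add_distrib, map_sum, map_smul, smul_smul, ← sum_smul, hcoeff,
    zero_smul, add_zero, smul_sum]
  simp only [mul_comm (s : R)]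

end Commutators

theorem stmt_12_general (p : ℕ) (l : ℕ) (hl : 2 ≤ l)
    (M : Type) [AddCommGroup M] [Module ℂ M] (L : ℤ → Module.End ℂ M)
    (hrep2 : ∀ m r : ℤ, (p : ℤ) ∣ m → ¬ (p : ℤ) ∣ r →
      L m * L r - L r * L m = (r : ℂ) • L (m + r))
    (hOmega : ∀ m n : ℤ, (p : ℤ) ∣ m → (p : ℤ) ∣ n → ∀ w : M,
      ∑ i ∈ Finset.range (l + 1),
        ((-1 : ℂ) ^ i * (l.choose i : ℂ)) • (L (m - (i : ℤ) * n)) ((L ((i : ℤ) * n)) w)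
        = 0) :
    ∀ (n s : ℤ) (w : M), (p : ℤ) ∣ n → ¬ (p : ℤ) ∣ s →
      ∑ i ∈ Finset.range (l + 1),
          ((-1 : ℂ) ^ i * (l.choose i : ℂ)) •
            (L (n - (i : ℤ) * (p : ℤ) + s)) ((L ((i : ℤ) * (p : ℤ))) w)
        + ∑ i ∈ Finset.range (l + 1),
            ((-1 : ℂ) ^ i * (l.choose i : ℂ)) •
              (L ((i : ℤ) * (p : ℤ) + s)) ((L (n - (i : ℤ) * (p : ℤ))) w)
        = 0 := by
  intro n s w hn hs
  have hs0 : (s : ℂ) ≠ 0 := Int.cast_ne_zero.mpr fun h => hs (h ▸ dvd_zero _)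
  have h := sum_apply_apply_apply_eq L hl hrep2 hn hs w
  rw [hOmega n p hn dvd_rfl, hOmega n p hn dvd_rfl, map_zero, zero_add, eq_comm,
    smul_eq_zero] at h
  exact h.resolve_left hs0

/-- If the operators `Ω_{m,n} = Σ_{i=0}^{l} (-1)^i C(l,i) L_{m-in} L_{in}` annihilate a
`g'`-module `M` for all `m,n ∈ pℤ` (with `l ≥ 2`), then for any `n ∈ pℤ`, `s ∉ pℤ` and
`w ∈ M`:
`Σ_i (-1)^i C(l,i) L_{n-ip+s} L_{ip} w + Σ_i (-1)^i C(l,i) L_{ip+s} L_{n-ip} w = 0`. -/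
theorem stmt_12 (p : ℕ) (hp : 1 < p) (l : ℕ) (hl : 2 ≤ l)
    (M : Type) [AddCommGroup M] [Module ℂ M] (L : ℤ → Module.End ℂ M)
    (hrep1 : ∀ m n : ℤ, (p : ℤ) ∣ m → (p : ℤ) ∣ n →
      L m * L n - L n * L m = (n - m : ℂ) • L (m + n))
    (hrep2 : ∀ m r : ℤ, (p : ℤ) ∣ m → ¬ (p : ℤ) ∣ r →
      L m * L r - L r * L m = (r : ℂ) • L (m + r))
    (hrep3 : ∀ r s : ℤ, ¬ (p : ℤ) ∣ r → ¬ (p : ℤ) ∣ s → L r * L s - L s * L r = 0)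
    (hOmega : ∀ m n : ℤ, (p : ℤ) ∣ m → (p : ℤ) ∣ n → ∀ w : M,
      ∑ i ∈ Finset.range (l + 1),
        ((-1 : ℂ) ^ i * (l.choose i : ℂ)) • (L (m - (i : ℤ) * n)) ((L ((i : ℤ) * n)) w)
        = 0) :
    ∀ (n s : ℤ) (w : M), (p : ℤ) ∣ n → ¬ (p : ℤ) ∣ s →
      ∑ i ∈ Finset.range (l + 1),
          ((-1 : ℂ) ^ i * (l.choose i : ℂ)) •
            (L (n - (i : ℤ) * (p : ℤ) + s)) ((L ((i : ℤ) * (p : ℤ))) w)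
        + ∑ i ∈ Finset.range (l + 1),
            ((-1 : ℂ) ^ i * (l.choose i : ℂ)) •
              (L ((i : ℤ) * (p : ℤ) + s)) ((L (n - (i : ℤ) * (p : ℤ))) w)
        = 0 :=
  stmt_12_general p l hl M L hrep2 hOmega
end

section
/- Let F = (F_{i,j}) be a (p-1)×p complex matrix (1 ≤ i ≤ p-1, 0 ≤ j ≤ p-1) satisfying F_{r, (i+s mod p)} F_{s,i} = F_{s, (i+r mod p)} F_{r,i} for all 0 ≤ i ≤ p-1, 1 ≤ r,s ≤ p-1. Then for any α, β ∈ ℂ, the formulas L_m v_{j+n} = (α+j+n+mβ) v_{j+n+m} (m,n ∈ pℤ), L_s v_{j+n} = F_{s̄, j} v_{j+n+s} (s ∉ pℤ, s̄ = s mod p), C_i v_{j+n} = 0, define a representation of the gap-p Virasoro algebra g on the space with basis {v_{j+pk} : j ∈ o(F), k ∈ ℤ}, where o(F) = {j : F_{i,j} ≠ 0 for some i}. -/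
-- `o(F) = {j : F_{i,j} ≠ 0 for some i}`.  The matrix `F` is encoded as a function
-- `ZMod p → ZMod p → ℂ` whose row `0` is required to vanish (rows are indexed by
-- `1 ≤ i ≤ p-1`, columns by `0 ≤ j ≤ p-1`).
def oF (p : ℕ) (F : ZMod p → ZMod p → ℂ) : Set (ZMod p) := {j | ∃ i, F i j ≠ 0}

-- The space with basis `{v_{j+pk} : j ∈ o(F), k ∈ ℤ}`, realized with basis indexed by
-- integers whose residue mod `p` lies in `o(F)`.
abbrev VF (p : ℕ) (F : ZMod p → ZMod p → ℂ) : Type :=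
  {n : ℤ // ((n : ZMod p) ∈ oF p F)} →₀ ℂ

-- The action of `L_m` on `V(α,β,F)`:
-- `L_m v_n = (α + n + mβ) v_{n+m}` for `m ∈ pℤ`, and
-- `L_s v_n = F_{s̄, n̄} v_{n+s}` for `s ∉ pℤ`.
open Classical in
noncomputable def lAct (p : ℕ) (F : ZMod p → ZMod p → ℂ) (α β : ℂ) (m : ℤ) :
    Module.End ℂ (VF p F) :=
  Finsupp.lsum ℂ fun n =>
    if hd : (p : ℤ) ∣ m then
      (α + (n.1 : ℂ) + (m : ℂ) * β) • Finsupp.lsingle (⟨n.1 + m, by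
        have h0 : ((m : ℤ) : ZMod p) = 0 := (ZMod.intCast_zmod_eq_zero_iff_dvd m p).2 hd
        show (((n.1 + m : ℤ) : ZMod p) ∈ oF p F)
        rw [Int.cast_add, h0, add_zero]
        exact n.2⟩ : {n : ℤ // ((n : ZMod p) ∈ oF p F)})
    else if hmem : (((n.1 + m : ℤ) : ZMod p) ∈ oF p F) then
      F (m : ZMod p) (n.1 : ZMod p) •
        Finsupp.lsingle (⟨n.1 + m, hmem⟩ : {n : ℤ // ((n : ZMod p) ∈ oF p F)})
    else 0

-- The (trivial) action of the central elements `C_i` on `V(α,β,F)`.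
noncomputable def cAct (p : ℕ) (F : ZMod p → ZMod p → ℂ) (_ : ZMod p) :
    Module.End ℂ (VF p F) := 0

/-! Each `L_m` is a weighted shift `v_k ↦ c_m(k) v_{k+m}` (`c = lCoeff`) of the basis, so
every commutator `[L_m, L_n]` is a weighted shift by `m + n` with weight
`c_n(k) c_m(k+n) - c_m(k) c_n(k+m)`. When `p ∣ m` the bracket relation is a polynomial
identity in `α`, `β`, `k` (using `k + m ≡ k mod p`); when neither index lies in `pℤ` the
vanishing of this weight is literally condition (III). The central elements act by `0`. -/

open Classical in
/-- `c • v_n`, with the convention `v_n = 0` when `n mod p ∉ o(F)`. -/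
noncomputable def basisVec {p : ℕ} {F : ZMod p → ZMod p → ℂ} (n : ℤ) (c : ℂ) : VF p F :=
  if h : (n : ZMod p) ∈ oF p F then Finsupp.single ⟨n, h⟩ c else 0

def lCoeff (p : ℕ) (F : ZMod p → ZMod p → ℂ) (α β : ℂ) (m n : ℤ) : ℂ :=
  if (p : ℤ) ∣ m then α + n + m * β else F m n

section

variable {p : ℕ} {F : ZMod p → ZMod p → ℂ} {α β : ℂ}

lemma eq_zero_of_notMem_oF {i j : ZMod p} (hj : j ∉ oF p F) : F i j = 0 := by
  by_contra h
  exact hj ⟨i, h⟩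

lemma intCast_add_of_dvd {m : ℤ} (hm : (p : ℤ) ∣ m) (k : ℤ) :
    ((k + m : ℤ) : ZMod p) = k := by
  rw [Int.cast_add, (ZMod.intCast_zmod_eq_zero_iff_dvd m p).2 hm, add_zero]

lemma basisVec_coe (x : {n : ℤ // ((n : ZMod p) ∈ oF p F)}) (c : ℂ) :
    basisVec x.1 c = Finsupp.single x c := by
  rw [basisVec, dif_pos x.2]

lemma basisVec_of_notMem {n : ℤ} (hn : (n : ZMod p) ∉ oF p F) (c : ℂ) :
    (basisVec n c : VF p F) = 0 := by
  rw [basisVec, dif_neg hn]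

lemma ext_basisVec {f g : Module.End ℂ (VF p F)}
    (h : ∀ k c, f (basisVec k c) = g (basisVec k c)) : f = g :=
  Finsupp.lhom_ext fun x c => by simpa only [basisVec_coe] using h x.1 c

/-- For `k mod p ∉ o(F)` both sides vanish: either `p ∣ m` and `k + m mod p ∉ o(F)` as well,
or the coefficient is `F_{m̄,k̄} = 0`. -/
lemma lAct_basisVec (m k : ℤ) (c : ℂ) :
    lAct p F α β m (basisVec k c) = lCoeff p F α β m k • basisVec (k + m) c := by
  by_cases hk : (k : ZMod p) ∈ oF p F
  · rw [basisVec, dif_pos hk, lAct, Finsupp.lsum_single, lCoeff]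
    split_ifs with hm hkm
    · simp [basisVec, dif_pos ((intCast_add_of_dvd hm k).symm ▸ hk)]
    · simp [basisVec, dif_pos hkm]
    · simp [basisVec_of_notMem hkm]
  · rw [basisVec_of_notMem hk, map_zero, lCoeff]
    split_ifs with hm
    · rw [basisVec_of_notMem ((intCast_add_of_dvd hm k).symm ▸ hk), smul_zero]
    · rw [eq_zero_of_notMem_oF hk, zero_smul]

lemma lAct_commutator_basisVec (m n k : ℤ) (c : ℂ) :
    (lAct p F α β m * lAct p F α β n - lAct p F α β n * lAct p F α β m) (basisVec k c) =
      (lCoeff p F α β n k * lCoeff p F α β m (k + n)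
          - lCoeff p F α β m k * lCoeff p F α β n (k + m)) • basisVec (k + (m + n)) c := by
  simp only [LinearMap.sub_apply, Module.End.mul_apply, lAct_basisVec, map_smul, smul_smul,
    sub_smul]
  rw [show k + n + m = k + (m + n) by ring, show k + m + n = k + (m + n) by ring]

lemma lAct_commutator_of_dvd_of_dvd {m n : ℤ} (hm : (p : ℤ) ∣ m) (hn : (p : ℤ) ∣ n) :
    lAct p F α β m * lAct p F α β n - lAct p F α β n * lAct p F α β m =
      (n - m : ℂ) • lAct p F α β (m + n) := by
  refine ext_basisVec fun k c => ?_
  rw [lAct_commutator_basisVec, LinearMap.smul_apply, lAct_basisVec, smul_smul]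
  simp only [lCoeff, if_pos hm, if_pos hn, if_pos (dvd_add hm hn)]
  congr 1
  push_cast
  ring

lemma lAct_commutator_of_dvd_of_not_dvd {m r : ℤ} (hm : (p : ℤ) ∣ m) (hr : ¬ (p : ℤ) ∣ r) :
    lAct p F α β m * lAct p F α β r - lAct p F α β r * lAct p F α β m =
      (r : ℂ) • lAct p F α β (m + r) := by
  have hmr : ¬ (p : ℤ) ∣ m + r := fun h => hr (by simpa using dvd_sub h hm)
  refine ext_basisVec fun k c => ?_
  rw [lAct_commutator_basisVec, LinearMap.smul_apply, lAct_basisVec, smul_smul]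
  simp only [lCoeff, if_pos hm, if_neg hr, if_neg hmr, intCast_add_of_dvd hm,
    add_comm m r ▸ intCast_add_of_dvd hm r]
  congr 1
  push_cast
  ring

lemma lAct_commutator_of_not_dvd_of_not_dvd
    (hIII : ∀ (i r s : ZMod p), r ≠ 0 → s ≠ 0 → F r (i + s) * F s i = F s (i + r) * F r i)
    {r s : ℤ} (hr : ¬ (p : ℤ) ∣ r) (hs : ¬ (p : ℤ) ∣ s) :
    lAct p F α β r * lAct p F α β s - lAct p F α β s * lAct p F α β r = 0 := by
  have hr0 : (r : ZMod p) ≠ 0 := mt (ZMod.intCast_zmod_eq_zero_iff_dvd r p).1 hr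
  have hs0 : (s : ZMod p) ≠ 0 := mt (ZMod.intCast_zmod_eq_zero_iff_dvd s p).1 hs
  refine ext_basisVec fun k c => ?_
  simp only [lAct_commutator_basisVec, LinearMap.zero_apply, lCoeff, if_neg hr, if_neg hs,
    Int.cast_add]
  rw [mul_comm, hIII k r s hr0 hs0, mul_comm, sub_self, zero_smul]

end

theorem stmt_13_general (p : ℕ) (F : ZMod p → ZMod p → ℂ) (α β : ℂ)
    (hIII : ∀ (i r s : ZMod p), r ≠ 0 → s ≠ 0 → F r (i + s) * F s i = F s (i + r) * F r i) :
    (∀ m n : ℤ, (p : ℤ) ∣ m → (p : ℤ) ∣ n →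
      lAct p F α β m * lAct p F α β n - lAct p F α β n * lAct p F α β m
        = (n - m : ℂ) • lAct p F α β (m + n)
          + (if m + n = 0 then
              ((1 : ℂ) / 12) * (((m / (p : ℤ) : ℤ) : ℂ) ^ 3 - ((m / (p : ℤ) : ℤ) : ℂ))
            else 0) • cAct p F 0) ∧
    (∀ m r : ℤ, (p : ℤ) ∣ m → ¬ (p : ℤ) ∣ r →
      lAct p F α β m * lAct p F α β r - lAct p F α β r * lAct p F α β m
        = (r : ℂ) • lAct p F α β (m + r)) ∧
    (∀ r s : ℤ, ¬ (p : ℤ) ∣ r → ¬ (p : ℤ) ∣ s →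
      lAct p F α β r * lAct p F α β s - lAct p F α β s * lAct p F α β r
        = if r + s = 0 then (r : ℂ) • cAct p F (r : ZMod p) else 0) ∧
    (∀ (i : ZMod p) (m : ℤ),
      cAct p F i * lAct p F α β m - lAct p F α β m * cAct p F i = 0) := by
  refine ⟨fun m n hm hn => ?_, fun m r hm hr => lAct_commutator_of_dvd_of_not_dvd hm hr,
    fun r s hr hs => ?_, fun i m => ?_⟩
  · simpa [cAct] using lAct_commutator_of_dvd_of_dvd (α := α) (β := β) hm hn
  · simpa [cAct] using lAct_commutator_of_not_dvd_of_not_dvd (α := α) (β := β) hIII hr hs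
  · rw [cAct, zero_mul, mul_zero]
    exact sub_self (0 : Module.End ℂ (VF p F))

/-- If `F` satisfies condition (III), then the formulas above define a representation of the
gap-`p` Virasoro algebra `g` on the space with basis `{v_{j+pk} : j ∈ o(F), k ∈ ℤ}`:
all bracket relations of `g` hold as commutators of the operators. -/
theorem stmt_13 (p : ℕ) (hp : 1 < p) (F : ZMod p → ZMod p → ℂ) (α β : ℂ)
    (hF0 : ∀ j, F 0 j = 0)
    (hIII : ∀ (i r s : ZMod p), r ≠ 0 → s ≠ 0 → F r (i + s) * F s i = F s (i + r) * F r i) :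
    (∀ m n : ℤ, (p : ℤ) ∣ m → (p : ℤ) ∣ n →
      lAct p F α β m * lAct p F α β n - lAct p F α β n * lAct p F α β m
        = (n - m : ℂ) • lAct p F α β (m + n)
          + (if m + n = 0 then
              ((1 : ℂ) / 12) * (((m / (p : ℤ) : ℤ) : ℂ) ^ 3 - ((m / (p : ℤ) : ℤ) : ℂ))
            else 0) • cAct p F 0) ∧
    (∀ m r : ℤ, (p : ℤ) ∣ m → ¬ (p : ℤ) ∣ r →
      lAct p F α β m * lAct p F α β r - lAct p F α β r * lAct p F α β m
        = (r : ℂ) • lAct p F α β (m + r)) ∧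
    (∀ r s : ℤ, ¬ (p : ℤ) ∣ r → ¬ (p : ℤ) ∣ s →
      lAct p F α β r * lAct p F α β s - lAct p F α β s * lAct p F α β r
        = if r + s = 0 then (r : ℂ) • cAct p F (r : ZMod p) else 0) ∧
    (∀ (i : ZMod p) (m : ℤ),
      cAct p F i * lAct p F α β m - lAct p F α β m * cAct p F i = 0) :=
  stmt_13_general p F α β hIII
end

section
/- The Virasoro (type V) module V_j(α,β) over g(0) is reducible if and only if α ∈ -j + pℤ and β ∈ {0,1}. -/
-- The type-`V` module `V_j(α,β)` over `g(0) = span{L_m, C_0 : m ∈ pℤ} ≅ Vir`: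
-- basis `{v_{j+pk} : k ∈ ℤ}` (indexed here by `k`), `C_0` acting as `0`, and
-- `L_m v_{j+pk} = (α + j + pk + mβ) v_{j+pk+m}` for `m ∈ pℤ` (so `k ↦ k + m/p`).
noncomputable def lActV (p : ℕ) (j : ℤ) (α β : ℂ) (m : ℤ) : Module.End ℂ (ℤ →₀ ℂ) :=
  Finsupp.lsum ℂ fun k =>
    (α + (j : ℂ) + (p : ℂ) * (k : ℂ) + (m : ℂ) * β) • Finsupp.lsingle (k + m / (p : ℤ))

/-!
`L_0` acts diagonally with pairwise distinct eigenvalues `α + j + pk`, so an invariant subspace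
containing `v` contains every basis vector occurring in `v`. `L_{pn}` sends `v_k` to
`(α + j + pk + pnβ) v_{k+n}`; unless `α + j = pk₀` with `β ∈ {0,1}`, any two basis vectors are
joined by a path of at most two such steps with nonzero coefficients, so every nonzero invariant
subspace is everything. In the exceptional cases `L_m` kills `v_{-k₀}` (`β = 0`), respectively
never reaches `v_{-k₀}` (`β = 1`), which gives the proper invariant subspaces.
-/

open Finsupp Polynomial

section Finsupp

variable {R ι : Type*}

theorem Finsupp.supported_ne_bot [Semiring R] [Nontrivial R] {s : Set ι} (hs : s.Nonempty) :
    supported R R s ≠ ⊥ := by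
  obtain ⟨i, hi⟩ := hs
  exact (Submodule.ne_bot_iff _).2
    ⟨single i 1, single_mem_supported R 1 hi, single_ne_zero.2 one_ne_zero⟩

theorem Finsupp.supported_ne_top [Semiring R] [Nontrivial R] {s : Set ι} (hs : s ≠ Set.univ) :
    supported R R s ≠ ⊤ := by
  obtain ⟨i, hi⟩ := (Set.ne_univ_iff_exists_notMem s).1 hs
  intro htop
  have hmem : single i (1 : R) ∈ supported R R s := htop ▸ Submodule.mem_top
  rw [mem_supported, support_single i one_ne_zero, Finset.coe_singleton,
    Set.singleton_subset_iff] at hmem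
  exact hi hmem

theorem Finsupp.supported_le_comap_of_forall_single_mem [Semiring R] {s : Set ι}
    {T : Module.End R (ι →₀ R)} (h : ∀ i ∈ s, T (single i 1) ∈ supported R R s) :
    supported R R s ≤ (supported R R s).comap T := by
  conv_lhs => rw [supported_eq_span_single]
  rw [Submodule.span_le]
  rintro _ ⟨i, hi, rfl⟩
  exact h i hi

theorem Finsupp.eq_top_of_forall_single_mem [Semiring R] {N : Submodule R (ι →₀ R)}
    (h : ∀ i, single i 1 ∈ N) : N = ⊤ := by
  rw [eq_top_iff, ← supported_univ, supported_eq_span_single, Submodule.span_le]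
  rintro _ ⟨i, -, rfl⟩
  exact h i

theorem Finsupp.single_mem_of_mem_of_diagonal {K : Type*} [Field K] {T : Module.End K (ι →₀ K)}
    {μ : ι → K} (hμ : μ.Injective) (hT : ∀ i, T (single i 1) = μ i • single i 1)
    {N : Submodule K (ι →₀ K)} (hN : N ≤ N.comap T) {v : ι →₀ K} (hv : v ∈ N) {i : ι}
    (hi : v i ≠ 0) : single i 1 ∈ N := by
  classical
  set q : K[X] := ∏ t ∈ v.support.erase i, (X - C (μ t))
  have hq_apply : ∀ t, aeval T q (single t 1) = q.eval (μ t) • single t 1 := fun t =>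
    Module.End.aeval_apply_of_mem_apply_eq_smul (hT t)
  have hq_eval : ∀ t ∈ v.support, q.eval (μ t) = 0 ↔ t ≠ i := by
    intro t ht
    simp [q, eval_prod, Finset.prod_eq_zero_iff, sub_eq_zero, hμ.eq_iff, mem_support_iff.1 ht]
  have hqv : aeval T q v = (v i * q.eval (μ i)) • single i 1 := by
    calc aeval T q v = ∑ t ∈ v.support, v t • aeval T q (single t 1) := by
          have hv_eq : v = ∑ t ∈ v.support, v t • single t 1 := by
            simp_rw [smul_single_one]
            exact v.sum_single.symm
          nth_rw 1 [hv_eq]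
          simp only [map_sum, map_smul]
      _ = v i • aeval T q (single i 1) := by
          refine Finset.sum_eq_single i (fun t ht hti => ?_)
            fun h => absurd (mem_support_iff.2 hi) h
          rw [hq_apply, (hq_eval t ht).2 hti, zero_smul, smul_zero]
      _ = (v i * q.eval (μ i)) • single i 1 := by rw [hq_apply, smul_smul]
  have hmem := aeval_apply_smul_mem_of_le_comap hv q T hN
  rw [hqv] at hmem
  have hne : v i * q.eval (μ i) ≠ 0 :=
    mul_ne_zero hi fun h => ((hq_eval i (mem_support_iff.2 hi)).1 h) rfl
  simpa only [smul_smul, inv_mul_cancel₀ hne, one_smul] using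
    N.smul_mem (v i * q.eval (μ i))⁻¹ hmem

end Finsupp

section VModule

variable {p : ℕ} {j : ℤ} {α β : ℂ}

theorem lActV_single (m k : ℤ) :
    lActV p j α β m (single k 1) = (α + j + p * k + m * β) • single (k + m / (p : ℤ)) 1 := by
  rw [lActV, lsum_single, LinearMap.smul_apply, lsingle_apply]

theorem lActV_zero_single (k : ℤ) :
    lActV p j α β 0 (single k 1) = (α + j + p * k) • single k 1 := by
  simp [lActV_single]

theorem lActV_mul_single (hp : p ≠ 0) (n k : ℤ) :
    lActV p j α β (p * n) (single k 1) = (α + j + p * k + p * n * β) • single (k + n) 1 := by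
  rw [lActV_single, Int.mul_ediv_cancel_left n (by exact_mod_cast hp), Int.cast_mul,
    Int.cast_natCast]

theorem single_mem_of_lActV_invariant (hp : p ≠ 0) {N : Submodule ℂ (ℤ →₀ ℂ)}
    (hN : ∀ m : ℤ, (p : ℤ) ∣ m → ∀ v ∈ N, lActV p j α β m v ∈ N) {k t : ℤ}
    (hk : single k 1 ∈ N) (hc : α + j + p * k + p * (t - k) * β ≠ 0) : single t 1 ∈ N := by
  have hmem := hN _ (dvd_mul_right _ (t - k)) _ hk
  rw [lActV_mul_single hp, add_sub_cancel, Int.cast_sub] at hmem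
  simpa only [smul_smul, inv_mul_cancel₀ hc, one_smul] using
    N.smul_mem (α + j + p * k + p * (t - k) * β)⁻¹ hmem

theorem supported_singleton_le_comap_lActV {k : ℤ} (hk : α + j = p * k) (m : ℤ) :
    supported ℂ ℂ {-k} ≤ (supported ℂ ℂ {-k}).comap (lActV p j α 0 m) := by
  refine supported_le_comap_of_forall_single_mem fun i hi => ?_
  rw [Set.mem_singleton_iff.1 hi, lActV_single, hk]
  push_cast
  simp

theorem supported_compl_singleton_le_comap_lActV (hp : p ≠ 0) {k : ℤ} (hk : α + j = p * k)
    {m : ℤ} (hm : (p : ℤ) ∣ m) :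
    supported ℂ ℂ {-k}ᶜ ≤ (supported ℂ ℂ {-k}ᶜ).comap (lActV p j α 1 m) := by
  obtain ⟨n, rfl⟩ := hm
  refine supported_le_comap_of_forall_single_mem fun i _ => ?_
  rw [lActV_mul_single hp, hk]
  by_cases hin : i + n = -k
  · have hin' : (i + n : ℂ) = -k := by exact_mod_cast hin
    have : (p * k + p * i + p * n * 1 : ℂ) = 0 := by linear_combination p * hin'
    rw [this, zero_smul]
    exact zero_mem _
  · exact Submodule.smul_mem _ _ (single_mem_supported ℂ 1 hin)

end VModule

theorem exists_intermediate_ne_zero {a P β : ℂ} (hP : P ≠ 0)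
    (h : ¬((∃ k : ℤ, a = P * k) ∧ (β = 0 ∨ β = 1))) (k t : ℤ) :
    ∃ s : ℤ, a + P * k + P * (s - k) * β ≠ 0 ∧ a + P * s + P * (t - s) * β ≠ 0 := by
  have hfrom : {s : ℤ | a + P * k + P * (s - k) * β = 0}.Subsingleton := by
    intro s₁ hs₁ s₂ hs₂
    rw [Set.mem_ofPred_eq] at hs₁ hs₂
    have hβ : β ≠ 0 := by
      rintro rfl
      exact h ⟨⟨-k, by push_cast; linear_combination hs₁⟩, .inl rfl⟩
    have : P * β * ((s₁ - s₂ : ℤ) : ℂ) = 0 := by push_cast; linear_combination hs₁ - hs₂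
    simpa [hP, hβ, sub_eq_zero] using this
  have hto : {s : ℤ | a + P * s + P * (t - s) * β = 0}.Subsingleton := by
    intro s₁ hs₁ s₂ hs₂
    rw [Set.mem_ofPred_eq] at hs₁ hs₂
    have hβ : β ≠ 1 := by
      rintro rfl
      exact h ⟨⟨-t, by push_cast; linear_combination hs₁⟩, .inr rfl⟩
    have : P * (1 - β) * ((s₁ - s₂ : ℤ) : ℂ) = 0 := by push_cast; linear_combination hs₁ - hs₂
    simpa [hP, sub_eq_zero, Ne.symm hβ] using this
  obtain ⟨s, hs⟩ := (hfrom.finite.union hto.finite).exists_notMem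
  exact ⟨s, fun h₁ => hs (.inl h₁), fun h₂ => hs (.inr h₂)⟩

theorem stmt_14_general (p : ℕ) (hp : 1 < p) (j : ℤ)
    (α β : ℂ) :
    (∃ N : Submodule ℂ (ℤ →₀ ℂ),
      (∀ m : ℤ, (p : ℤ) ∣ m → ∀ v ∈ N, lActV p j α β m v ∈ N) ∧ N ≠ ⊥ ∧ N ≠ ⊤)
    ↔ ((∃ k : ℤ, α + (j : ℂ) = (p : ℂ) * (k : ℂ)) ∧ (β = 0 ∨ β = 1)) := by
  have hp0 : p ≠ 0 := by omega
  constructor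
  · rintro ⟨N, hN, hbot, htop⟩
    by_contra hgeneric
    obtain ⟨v, hvN, hv0⟩ := (Submodule.ne_bot_iff N).1 hbot
    obtain ⟨k, hk⟩ := Finsupp.ne_iff.1 hv0
    have hL₀ : (fun k : ℤ => α + j + p * k).Injective := fun a b hab => by
      simpa [hp0] using hab
    have hek : single k 1 ∈ N :=
      single_mem_of_mem_of_diagonal hL₀ lActV_zero_single (hN 0 (dvd_zero _)) hvN hk
    refine htop (eq_top_of_forall_single_mem fun t => ?_)
    obtain ⟨s, hks, hst⟩ := exists_intermediate_ne_zero (Nat.cast_ne_zero.2 hp0) hgeneric k t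
    exact single_mem_of_lActV_invariant hp0 hN (single_mem_of_lActV_invariant hp0 hN hek hks) hst
  · rintro ⟨⟨k, hk⟩, rfl | rfl⟩
    · exact ⟨supported ℂ ℂ {-k}, fun m _ => supported_singleton_le_comap_lActV hk m,
        supported_ne_bot (Set.singleton_nonempty _), supported_ne_top (Set.singleton_ne_univ _)⟩
    · exact ⟨supported ℂ ℂ {-k}ᶜ,
        fun m hm => supported_compl_singleton_le_comap_lActV hp0 hk hm,
        supported_ne_bot (Set.nonempty_compl.2 (Set.singleton_ne_univ _)),
        supported_ne_top (Set.compl_ne_univ.2 (Set.singleton_nonempty _))⟩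

/-- The module `V_j(α,β)` over `g(0)` is reducible (has a nonzero proper invariant
subspace) if and only if `α ∈ -j + pℤ` and `β ∈ {0,1}`. -/
theorem stmt_14 (p : ℕ) (hp : 1 < p) (j : ℤ) (hj0 : 0 ≤ j) (hjp : j < (p : ℤ))
    (α β : ℂ) :
    (∃ N : Submodule ℂ (ℤ →₀ ℂ),
      (∀ m : ℤ, (p : ℤ) ∣ m → ∀ v ∈ N, lActV p j α β m v ∈ N) ∧ N ≠ ⊥ ∧ N ≠ ⊤)
    ↔ ((∃ k : ℤ, α + (j : ℂ) = (p : ℂ) * (k : ℂ)) ∧ (β = 0 ∨ β = 1)) :=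
  stmt_14_general p hp j α β
end

section
/- Let M = V(α,β,F) be an irreducible module of intermediate series over the gap-p Virasoro algebra with more than one component, and let M(i) be a component. Then M = U(g'')·M(i), where g'' = span{L_s : s ∉ pℤ}. Moreover, if L_s M(i) ≠ 0 for some s ∉ pℤ, then L_s M = M and L_s M(j) ≠ 0 for every component M(j). -/
-- The component `M(j) = V_{(j)} = span{v_{j+pk} : k ∈ ℤ}` of `M = V(α,β,F)`.
noncomputable def component (p : ℕ) (F : ZMod p → ZMod p → ℂ) (j : ZMod p) :
    Submodule ℂ (VF p F) :=
  Submodule.span ℂ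
    {x : VF p F | ∃ n : {n : ℤ // ((n : ZMod p) ∈ oF p F)},
      ((n.1 : ZMod p) = j) ∧ x = Finsupp.single n 1}

/-! Call a set `T` of residues shift-closed if `j ∈ T ∩ o(F)` and `F t j ≠ 0` force `j + t ∈ T`.
The vectors supported on the components indexed by such a `T` form a submodule of `M`, so by
irreducibility a shift-closed set meeting `o(F)` contains `o(F)`.

For a `g''`-invariant `N ⊇ M(i)` the residues whose components lie in `N` form a shift-closed
set, hence `N = M`. If `L_s M(i) ≠ 0` then `F s i ≠ 0`, and by (III) the residues `j` with
`F s j = 0` form a shift-closed set, which must miss `o(F)`: `L_s` kills no basis vector. By (II)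
`o(F)` is then stable under `+ s`, hence, being finite, under `- s`, and `L_s` is onto. -/

lemma Set.Finite.sub_mem_of_forall_add_mem {G : Type*} [AddGroup G] {A : Set G} (hA : A.Finite)
    {s : G} (h : ∀ j ∈ A, j + s ∈ A) : ∀ j ∈ A, j - s ∈ A := by
  have hbij := (hA.injOn_iff_bijOn_of_mapsTo (f := (· + s)) h).1 (add_left_injective s).injOn
  intro j hj
  obtain ⟨k, hk, rfl⟩ := hbij.surjOn hj
  simpa using hk

namespace IntermediateSeries

abbrev Idx (p : ℕ) (F : ZMod p → ZMod p → ℂ) : Type := {n : ℤ // ((n : ZMod p) ∈ oF p F)}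

def ShiftClosed (p : ℕ) (F : ZMod p → ZMod p → ℂ) (T : Set (ZMod p)) : Prop :=
  ∀ j t : ZMod p, j ∈ T → j ∈ oF p F → F t j ≠ 0 → j + t ∈ T

variable {p : ℕ} {F : ZMod p → ZMod p → ℂ} {α β : ℂ}

lemma exists_idx_cast_eq {j : ZMod p} (hj : j ∈ oF p F) : ∃ n : Idx p F, (n.1 : ZMod p) = j := by
  obtain ⟨n, rfl⟩ := ZMod.intCast_surjective j
  exact ⟨⟨n, hj⟩, rfl⟩

lemma eq_top_of_single_mem {N : Submodule ℂ (VF p F)}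
    (h : ∀ n : Idx p F, Finsupp.single n (1 : ℂ) ∈ N) : N = ⊤ := by
  rw [eq_top_iff, ← Finsupp.supported_univ, Finsupp.supported_eq_span_single, Submodule.span_le]
  rintro _ ⟨n, -, rfl⟩
  exact h n

open Classical in
lemma lAct_single_sub {m : ℤ} (hm : ¬ (p : ℤ) ∣ m) (n : Idx p F)
    (hmem : ((n.1 - m : ℤ) : ZMod p) ∈ oF p F) (c : ℂ) :
    lAct p F α β m (Finsupp.single ⟨n.1 - m, hmem⟩ c) =
      F m ((n.1 - m : ℤ) : ZMod p) • Finsupp.single n c := by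
  simp [lAct, hm, n.2]

open Classical in
lemma lAct_single_eq_zero {m : ℤ} (hm : ¬ (p : ℤ) ∣ m) {n : Idx p F}
    (hF : F m n.1 = 0) (c : ℂ) : lAct p F α β m (Finsupp.single n c) = 0 := by
  simp [lAct, hm, hF]

open Classical in
lemma lAct_single_mem_supported {T : Set (ZMod p)} (hT : ShiftClosed p F T) (m : ℤ)
    {n : Idx p F} (hn : (n.1 : ZMod p) ∈ T) (c : ℂ) :
    lAct p F α β m (Finsupp.single n c) ∈
      Finsupp.supported ℂ ℂ {k : Idx p F | (k.1 : ZMod p) ∈ T} := by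
  simp only [lAct, Finsupp.lsum_single]
  split_ifs with hd
  · refine Submodule.smul_mem _ _ (Finsupp.single_mem_supported ℂ _ ?_)
    simpa [(ZMod.intCast_zmod_eq_zero_iff_dvd m p).2 hd] using hn
  · by_cases hF : F m n.1 = 0
    · simp [hF]
    · refine Submodule.smul_mem _ _ (Finsupp.single_mem_supported ℂ _ ?_)
      simpa using hT _ _ hn n.2 hF
  · exact zero_mem _

lemma supported_le_comap_lAct {T : Set (ZMod p)} (hT : ShiftClosed p F T) (m : ℤ) :
    Finsupp.supported ℂ ℂ {k : Idx p F | (k.1 : ZMod p) ∈ T} ≤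
      (Finsupp.supported ℂ ℂ {k : Idx p F | (k.1 : ZMod p) ∈ T}).comap (lAct p F α β m) := by
  conv_lhs => rw [Finsupp.supported_eq_span_single]
  rw [Submodule.span_le]
  rintro _ ⟨n, hn, rfl⟩
  exact lAct_single_mem_supported hT m hn 1

theorem oF_subset_of_shiftClosed
    (hirr : ∀ N : Submodule ℂ (VF p F),
      (∀ (m : ℤ) (v), v ∈ N → lAct p F α β m v ∈ N) → N = ⊥ ∨ N = ⊤)
    {T : Set (ZMod p)} (hT : ShiftClosed p F T) {i : ZMod p} (hi : i ∈ oF p F) (hiT : i ∈ T) :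
    oF p F ⊆ T := by
  set N := Finsupp.supported ℂ ℂ {k : Idx p F | (k.1 : ZMod p) ∈ T}
  have hN_ne_bot : N ≠ ⊥ := by
    obtain ⟨n, rfl⟩ := exists_idx_cast_eq hi
    refine (Submodule.ne_bot_iff N).2 ⟨_, Finsupp.single_mem_supported ℂ (1 : ℂ) hiT, ?_⟩
    simp
  have hN_top : N = ⊤ :=
    (hirr N fun m _ hv => supported_le_comap_lAct hT m hv).resolve_left hN_ne_bot
  intro j hj
  obtain ⟨n, rfl⟩ := exists_idx_cast_eq hj
  have hn : Finsupp.single n (1 : ℂ) ∈ N := hN_top ▸ Submodule.mem_top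
  simpa using (Finsupp.mem_supported ℂ _).1 hn

theorem eq_top_of_component_le (hF0 : ∀ j, F 0 j = 0)
    (hirr : ∀ N : Submodule ℂ (VF p F),
      (∀ (m : ℤ) (v), v ∈ N → lAct p F α β m v ∈ N) → N = ⊥ ∨ N = ⊤)
    {i : ZMod p} (hi : i ∈ oF p F) {N : Submodule ℂ (VF p F)}
    (hN : ∀ s : ℤ, ¬ (p : ℤ) ∣ s → ∀ v ∈ N, lAct p F α β s v ∈ N)
    (hiN : component p F i ≤ N) : N = ⊤ := by
  set S : Set (ZMod p) :=
    {j | ∀ n : Idx p F, (n.1 : ZMod p) = j → Finsupp.single n (1 : ℂ) ∈ N}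
  have hiS : i ∈ S := fun n hn => hiN (Submodule.subset_span ⟨n, hn, rfl⟩)
  have hS : ShiftClosed p F S := by
    intro j t hjS hj hFt n hn
    obtain ⟨t, rfl⟩ := ZMod.intCast_surjective t
    have ht : ¬ (p : ℤ) ∣ t := fun hd =>
      hFt (by rw [(ZMod.intCast_zmod_eq_zero_iff_dvd t p).2 hd, hF0])
    have hcast : ((n.1 - t : ℤ) : ZMod p) = j := by push_cast; rw [hn]; ring
    have hmem : ((n.1 - t : ℤ) : ZMod p) ∈ oF p F := hcast ▸ hj
    have hshift := hN t ht _ (hjS ⟨n.1 - t, hmem⟩ hcast)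
    rwa [lAct_single_sub ht n hmem, hcast, Submodule.smul_mem_iff _ hFt] at hshift
  refine eq_top_of_single_mem fun n => ?_
  exact oF_subset_of_shiftClosed hirr hS hi hiS n.2 n rfl

lemma ne_zero_of_exists_lAct_ne_zero {s : ℤ} (hs : ¬ (p : ℤ) ∣ s) {i : ZMod p}
    (h : ∃ v ∈ component p F i, lAct p F α β s v ≠ 0) : F s i ≠ 0 := by
  intro hFi
  obtain ⟨v, hv, hne⟩ := h
  refine hne (LinearMap.mem_ker.1 ((Submodule.span_le.2 ?_ : component p F i ≤ _) hv))
  rintro _ ⟨n, rfl, rfl⟩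
  exact lAct_single_eq_zero hs hFi 1

theorem forall_mem_oF_ne_zero (hF0 : ∀ j, F 0 j = 0)
    (hIII : ∀ (i r s : ZMod p), r ≠ 0 → s ≠ 0 → F r (i + s) * F s i = F s (i + r) * F r i)
    (hirr : ∀ N : Submodule ℂ (VF p F),
      (∀ (m : ℤ) (v), v ∈ N → lAct p F α β m v ∈ N) → N = ⊥ ∨ N = ⊤)
    {r i : ZMod p} (hr : r ≠ 0) (hi : i ∈ oF p F) (hFi : F r i ≠ 0) :
    ∀ j ∈ oF p F, F r j ≠ 0 := by
  have hT : ShiftClosed p F {j | F r j = 0} := by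
    intro j t hj _ hFt
    have ht : t ≠ 0 := by rintro rfl; exact hFt (hF0 j)
    have hprod : F r (j + t) * F t j = 0 := by
      rw [hIII j r t hr ht, show F r j = 0 from hj, mul_zero]
    exact (mul_eq_zero.1 hprod).resolve_right hFt
  intro j hj hFj
  exact hFi (oF_subset_of_shiftClosed hirr hT hj hFj hi)

lemma range_lAct_eq_top {m : ℤ} (hm : ¬ (p : ℤ) ∣ m) (hF : ∀ j ∈ oF p F, F m j ≠ 0)
    (hsub : ∀ j ∈ oF p F, j - m ∈ oF p F) : LinearMap.range (lAct p F α β m) = ⊤ := by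
  refine eq_top_of_single_mem fun n => ?_
  have hmem : ((n.1 - m : ℤ) : ZMod p) ∈ oF p F := by push_cast; exact hsub _ n.2
  refine ⟨(F m ((n.1 - m : ℤ) : ZMod p))⁻¹ • Finsupp.single ⟨n.1 - m, hmem⟩ 1, ?_⟩
  rw [map_smul, lAct_single_sub hm n hmem, inv_smul_smul₀ (hF _ hmem)]

lemma exists_mem_component_lAct_ne_zero {m : ℤ} (hm : ¬ (p : ℤ) ∣ m) {j : ZMod p}
    (hF : F m j ≠ 0) (hadd : j + m ∈ oF p F) :
    ∃ v ∈ component p F j, lAct p F α β m v ≠ 0 := by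
  obtain ⟨n, hn⟩ := exists_idx_cast_eq hadd
  have hcast : ((n.1 - m : ℤ) : ZMod p) = j := by push_cast; rw [hn]; ring
  have hmem : ((n.1 - m : ℤ) : ZMod p) ∈ oF p F := hcast ▸ ⟨m, hF⟩
  refine ⟨Finsupp.single ⟨n.1 - m, hmem⟩ 1, Submodule.subset_span ⟨_, hcast, rfl⟩, ?_⟩
  rw [lAct_single_sub hm n hmem, hcast]
  simp [hF]

end IntermediateSeries

open IntermediateSeries in
theorem stmt_17_general (p : ℕ) (hp : 1 < p) (F : ZMod p → ZMod p → ℂ) (α β : ℂ)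
    (hF0 : ∀ j, F 0 j = 0)
    (hII : ∀ i j : ZMod p, F i j ≠ 0 → ∃ s, F s (i + j) ≠ 0)
    (hIII : ∀ (i r s : ZMod p), r ≠ 0 → s ≠ 0 → F r (i + s) * F s i = F s (i + r) * F r i)
    (hirr : ∀ N : Submodule ℂ (VF p F),
      (∀ (m : ℤ) (v), v ∈ N → lAct p F α β m v ∈ N) → N = ⊥ ∨ N = ⊤) :
    (∀ i ∈ oF p F, ∀ N : Submodule ℂ (VF p F),
      (∀ s : ℤ, ¬ (p : ℤ) ∣ s → ∀ v ∈ N, lAct p F α β s v ∈ N) →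
      component p F i ≤ N → N = ⊤) ∧
    (∀ i ∈ oF p F, ∀ s : ℤ, ¬ (p : ℤ) ∣ s →
      (∃ v ∈ component p F i, lAct p F α β s v ≠ 0) →
      Submodule.map (lAct p F α β s : VF p F →ₗ[ℂ] VF p F) ⊤ = ⊤ ∧
      ∀ j ∈ oF p F, ∃ v ∈ component p F j, lAct p F α β s v ≠ 0) := by
  have : NeZero p := ⟨by omega⟩
  refine ⟨fun i hi N hN hiN => eq_top_of_component_le hF0 hirr hi hN hiN, ?_⟩
  rintro i hi s hs hv
  have hs0 : (s : ZMod p) ≠ 0 := mt (ZMod.intCast_zmod_eq_zero_iff_dvd s p).1 hs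
  have hall := forall_mem_oF_ne_zero hF0 hIII hirr hs0 hi (ne_zero_of_exists_lAct_ne_zero hs hv)
  have hadd : ∀ j ∈ oF p F, j + s ∈ oF p F := fun j hj => by
    obtain ⟨t, ht⟩ := hII _ _ (hall j hj)
    exact ⟨t, by rwa [add_comm]⟩
  have hsub := (Set.toFinite _).sub_mem_of_forall_add_mem hadd
  exact ⟨by rw [Submodule.map_top]; exact range_lAct_eq_top hs hall hsub,
    fun j hj => exists_mem_component_lAct_ne_zero hs (hall j hj) (hadd j hj)⟩

/-- Proposition 5.1 (1),(2): let `M = V(α,β,F)` be an irreducible module of intermediate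
series over the gap-`p` Virasoro algebra with more than one component and let `M(i)` be a
component.  Then `M = U(g'')·M(i)` (every `g''`-invariant subspace containing `M(i)` is all
of `M`), and if `L_s M(i) ≠ 0` for some `s ∉ pℤ` then `L_s M = M` and `L_s M(j) ≠ 0` for
every component `M(j)`. -/
theorem stmt_17 (p : ℕ) (hp : 1 < p) (F : ZMod p → ZMod p → ℂ) (α β : ℂ)
    (hF0 : ∀ j, F 0 j = 0)
    (hI : (0 : ZMod p) ∈ oF p F)
    (hII : ∀ i j : ZMod p, F i j ≠ 0 → ∃ s, F s (i + j) ≠ 0)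
    (hIII : ∀ (i r s : ZMod p), r ≠ 0 → s ≠ 0 → F r (i + s) * F s i = F s (i + r) * F r i)
    (hnt : (oF p F).Nontrivial)
    (hirr : ∀ N : Submodule ℂ (VF p F),
      (∀ (m : ℤ) (v), v ∈ N → lAct p F α β m v ∈ N) → N = ⊥ ∨ N = ⊤) :
    (∀ i ∈ oF p F, ∀ N : Submodule ℂ (VF p F),
      (∀ s : ℤ, ¬ (p : ℤ) ∣ s → ∀ v ∈ N, lAct p F α β s v ∈ N) →
      component p F i ≤ N → N = ⊤) ∧
    (∀ i ∈ oF p F, ∀ s : ℤ, ¬ (p : ℤ) ∣ s →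
      (∃ v ∈ component p F i, lAct p F α β s v ≠ 0) →
      Submodule.map (lAct p F α β s : VF p F →ₗ[ℂ] VF p F) ⊤ = ⊤ ∧
      ∀ j ∈ oF p F, ∃ v ∈ component p F j, lAct p F α β s v ≠ 0) :=
  stmt_17_general p hp F α β hF0 hII hIII hirr
end

section
/- For p = 5, suppose a (4×5) matrix F has all entries in rows 1 and 2 nonzero and rows 3, 4 zero, and F satisfies condition (III): F_{r,(i+s mod 5)}F_{s,i} = F_{s,(i+r mod 5)}F_{r,i} for all i and r,s ∈ {1,2}. Then the second row is determined by the first row and F_{2,0}: F_{2,1} = F_{1,2}F_{2,0}/F_{1,0}, F_{2,2} = F_{1,2}F_{1,3}F_{2,0}/(F_{1,0}F_{1,1}), F_{2,3} = F_{1,3}F_{1,4}F_{2,0}/(F_{1,0}F_{1,1}), and F_{2,4} = F_{1,4}F_{2,0}/F_{1,1}. -/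
/-! The relations (III) with `r = 2`, `s = 1` read `F₂(i+1) F₁(i) = F₁(i+2) F₂(i)`, which says that
`F₂(k) / (F₁(k) F₁(k+1))` does not depend on `k`. Evaluating this invariant at `k = 1, …, 4` and
using `F₁(5) = F₁(0)` gives the four formulas. -/

theorem mul_eq_of_recurrence {K : Type*} [Field K] {a b : ℕ → K} (ha : ∀ k, a k ≠ 0)
    (hrec : ∀ k, b (k + 1) * a k = a (k + 2) * b k) (k : ℕ) :
    b k * (a 0 * a 1) = b 0 * (a k * a (k + 1)) := by
  induction k with
  | zero => rfl
  | succ k ih =>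
    refine mul_right_cancel₀ (ha k) ?_
    linear_combination a 0 * a 1 * hrec k + a (k + 2) * ih

theorem stmt_19_general (F : ZMod 5 → ZMod 5 → ℂ)
    (h1 : ∀ j : ZMod 5, F 1 j ≠ 0)
    (hIII : ∀ (i r s : ZMod 5), (r = 1 ∨ r = 2) → (s = 1 ∨ s = 2) →
      F r (i + s) * F s i = F s (i + r) * F r i) :
    F 2 1 = F 1 2 * F 2 0 / F 1 0 ∧
    F 2 2 = F 1 2 * F 1 3 * F 2 0 / (F 1 0 * F 1 1) ∧
    F 2 3 = F 1 3 * F 1 4 * F 2 0 / (F 1 0 * F 1 1) ∧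
    F 2 4 = F 1 4 * F 2 0 / F 1 1 := by
  have key := mul_eq_of_recurrence (a := fun k : ℕ => F 1 k) (b := fun k => F 2 k)
    (fun k => h1 k) (fun k => by
      push_cast
      exact hIII k 2 1 (.inr rfl) (.inl rfl))
  have k1 := key 1
  have k2 := key 2
  have k3 := key 3
  have k4 := key 4
  norm_num at k1 k2 k3 k4
  rw [show (5 : ZMod 5) = 0 from rfl] at k4
  refine ⟨?_, ?_, ?_, ?_⟩ <;> field_simp [h1]
  · exact mul_right_cancel₀ (h1 1) (by linear_combination k1)
  · linear_combination k2
  · linear_combination k3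
  · exact mul_right_cancel₀ (h1 0) (by linear_combination k4)

/-- Example 3 of the paper (`p = 5`): if a `4 × 5` matrix `F` (rows `1 ≤ i ≤ 4`, columns
`0 ≤ j ≤ 4`, encoded as a function `ZMod 5 → ZMod 5 → ℂ`) has all entries of rows `1,2`
nonzero, rows `3,4` zero, and satisfies condition (III) for `r,s ∈ {1,2}`, then the second
row is determined by the first row and `F_{2,0}`. -/
theorem stmt_19 (F : ZMod 5 → ZMod 5 → ℂ)
    (h1 : ∀ j : ZMod 5, F 1 j ≠ 0) (h2 : ∀ j : ZMod 5, F 2 j ≠ 0)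
    (h3 : ∀ j : ZMod 5, F 3 j = 0) (h4 : ∀ j : ZMod 5, F 4 j = 0)
    (hIII : ∀ (i r s : ZMod 5), (r = 1 ∨ r = 2) → (s = 1 ∨ s = 2) →
      F r (i + s) * F s i = F s (i + r) * F r i) :
    F 2 1 = F 1 2 * F 2 0 / F 1 0 ∧
    F 2 2 = F 1 2 * F 1 3 * F 2 0 / (F 1 0 * F 1 1) ∧
    F 2 3 = F 1 3 * F 1 4 * F 2 0 / (F 1 0 * F 1 1) ∧
    F 2 4 = F 1 4 * F 2 0 / F 1 1 :=
  stmt_19_general F h1 hIII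
end
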